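/- arXiv:1306.5272 — 4 statements merged into one kernel-verified Lean document; each statement's English description precedes it below -/
import Mathlib

section
/- Let E be a sublinear expectation on ℋ. Then every linear functional f : ℋ → ℝ with f(X) ≤ E[X] for all X ∈ ℋ is a linear expectation: f is monotone (X ≤ Y pointwise implies f(X) ≤ f(Y)) and constant preserving (f(c) = c for every constant function c). Consequently E is the pointwise supremum of a nonempty family of linear expectations on ℋ. -/
/-!
A functional `f ≤ E` is squeezed by `f X ≤ E X` and `-f X = f (-X) ≤ E (-X)`. Since
`E (-c) = -c = -E c` on constants, there `f c = c`; for `X ≤ Y` the first bound at `X - Y`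
together with `E (X - Y) ≤ E 0 = 0` gives monotonicity. For the supremum, Hahn–Banach extends
`t • X ↦ t * E X` from the line through `X`, where it is dominated by `E` because
`t * E X ≤ E (t • X)` for every real `t`, to a linear functional dominated by `E` on all of `ℋ`.
-/

structure IsSublinear {V : Type*} [AddCommGroup V] [Module ℝ V] (p : V → ℝ) : Prop where
  smul_of_pos : ∀ c : ℝ, 0 < c → ∀ x, p (c • x) = c * p x
  add_le : ∀ x y, p (x + y) ≤ p x + p y

namespace IsSublinear

variable {V : Type*} [AddCommGroup V] [Module ℝ V] {p : V → ℝ}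

theorem map_zero (hp : IsSublinear p) : p 0 = 0 := by
  have h := hp.smul_of_pos 2 two_pos 0
  rw [smul_zero] at h
  linarith

theorem mul_le_smul (hp : IsSublinear p) (c : ℝ) (x : V) : c * p x ≤ p (c • x) := by
  rcases lt_trichotomy c 0 with hc | rfl | hc
  · have hcancel : p 0 ≤ p (c • x) + p ((-c) • x) := by
      simpa only [← add_smul, add_neg_cancel, zero_smul] using hp.add_le (c • x) ((-c) • x)
    rw [hp.map_zero, hp.smul_of_pos (-c) (neg_pos.2 hc)] at hcancel
    linarith
  · simp [hp.map_zero]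
  · exact (hp.smul_of_pos c hc x).ge

theorem exists_linearMap_le_eq (hp : IsSublinear p) (x : V) :
    ∃ f : V →ₗ[ℝ] ℝ, (∀ y, f y ≤ p y) ∧ f x = p x := by
  have hker : ∀ c : ℝ, c • x = 0 → c • p x = 0 := by
    intro c hc
    rcases eq_or_ne c 0 with rfl | hc₀
    · exact zero_smul ℝ _
    · rw [(smul_eq_zero.1 hc).resolve_left hc₀, hp.map_zero, smul_zero]
  let f₀ := LinearPMap.mkSpanSingleton' (σ := RingHom.id ℝ) x (p x) hker
  have hf₀ : ∀ y : f₀.domain, f₀ y ≤ p y := by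
    rintro ⟨y, hy⟩
    obtain ⟨c, rfl⟩ := Submodule.mem_span_singleton.1 hy
    rw [LinearPMap.mkSpanSingleton'_apply]
    exact hp.mul_le_smul c x
  obtain ⟨f, hf_ext, hf_le⟩ := exists_extension_of_le_sublinear f₀ p hp.smul_of_pos hp.add_le hf₀
  have hx : x ∈ f₀.domain := Submodule.mem_span_singleton_self x
  exact ⟨f, hf_le, (hf_ext ⟨x, hx⟩).trans (LinearPMap.mkSpanSingleton'_apply_self _ _ _ _)⟩

theorem isLUB_linearMap_le (hp : IsSublinear p) (x : V) :
    IsLUB {r : ℝ | ∃ f : V →ₗ[ℝ] ℝ, (∀ y, f y ≤ p y) ∧ r = f x} (p x) := by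
  refine ⟨?_, fun b hb => ?_⟩
  · rintro r ⟨f, hf, rfl⟩
    exact hf x
  · obtain ⟨f, hf_le, hfx⟩ := hp.exists_linearMap_le_eq x
    exact hb ⟨f, hf_le, hfx.symm⟩

end IsSublinear

namespace LinearMap

variable {V : Type*} [AddCommGroup V] [Module ℝ V] {f : V →ₗ[ℝ] ℝ} {p : V → ℝ}

theorem monotone_of_le_of_monotone [PartialOrder V] [IsOrderedAddMonoid V]
    (hf : ∀ y, f y ≤ p y) (hp : Monotone p) (hp₀ : p 0 = 0) : Monotone f := by
  intro x y hxy
  have h : f (x - y) ≤ 0 := hp₀ ▸ (hf (x - y)).trans (hp (sub_nonpos.2 hxy))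
  rw [map_sub] at h
  linarith

theorem apply_eq_of_le_of_map_neg (hf : ∀ y, f y ≤ p y) {x : V} (hx : p (-x) = -p x) :
    f x = p x := by
  have h := hf (-x)
  rw [map_neg, hx] at h
  exact le_antisymm (hf x) (by linarith)

end LinearMap

/-- Let `E` be a sublinear expectation on a linear subspace `ℋ` of the real
functions on `Ω` containing the constants.  Then every linear functional on `ℋ` dominated by
`E` is a linear expectation (monotone and constant preserving), and `E` is the pointwise
supremum of the (nonempty) family of linear expectations dominated by it. -/
theorem sublinear_expectation_is_sup_of_linear_expectations
    {Ω : Type*} (ℋ : Submodule ℝ (Ω → ℝ))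
    (hconst : ∀ c : ℝ, (fun _ : Ω => c) ∈ ℋ)
    (E : ℋ → ℝ)
    (hmono : ∀ X Y : ℋ, (∀ ω, (X : Ω → ℝ) ω ≤ (Y : Ω → ℝ) ω) → E X ≤ E Y)
    (hcp : ∀ c : ℝ, E ⟨fun _ => c, hconst c⟩ = c)
    (hsub : ∀ X Y : ℋ, E (X + Y) ≤ E X + E Y)
    (hhom : ∀ (l : ℝ), 0 ≤ l → ∀ X : ℋ, E (l • X) = l * E X) :
    (∀ f : ℋ →ₗ[ℝ] ℝ, (∀ X, f X ≤ E X) →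
        ((∀ X Y : ℋ, (∀ ω, (X : Ω → ℝ) ω ≤ (Y : Ω → ℝ) ω) → f X ≤ f Y) ∧
          ∀ c : ℝ, f ⟨fun _ => c, hconst c⟩ = c)) ∧
      (∃ f : ℋ →ₗ[ℝ] ℝ, ∀ X, f X ≤ E X) ∧
      ∀ X : ℋ, IsLUB {r : ℝ | ∃ f : ℋ →ₗ[ℝ] ℝ, (∀ Y, f Y ≤ E Y) ∧ r = f X} (E X) := by
  have hE : IsSublinear E := ⟨fun c hc => hhom c hc.le, hsub⟩
  refine ⟨fun f hf => ⟨?_, fun c => ?_⟩, ?_, hE.isLUB_linearMap_le⟩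
  · exact LinearMap.monotone_of_le_of_monotone hf hmono hE.map_zero
  · rw [LinearMap.apply_eq_of_le_of_map_neg hf, hcp]
    change E ⟨fun _ => -c, hconst (-c)⟩ = _
    rw [hcp, hcp]
  · obtain ⟨f, hf, -⟩ := hE.exists_linearMap_le_eq 0
    exact ⟨f, hf⟩
end

section
/- With U, Σ, C and U_Σ as in the context, ‖·‖_{U_Σ} is a norm on U_Σ and (U_Σ, ‖·‖_{U_Σ}) is a Banach space, i.e. it is complete. -/
/-! Since `‖Q^{1/2}‖ ≤ C` for `Q ∈ Σ`, every representation of `u` has cost at least `‖u‖ / C`,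
so `‖u‖ ≤ C ‖u‖_{U_Σ}`. The key property is countable subadditivity: given near-optimal
representations of the terms of a series converging in `U`, their concatenation along
`ℕ ≃ ℕ × ℕ` represents the sum, and its cost is the sum of the costs. Taking two terms gives the
triangle inequality. A Cauchy sequence `f` in `U_Σ` is Cauchy in `U`, with limit `u`; along a
subsequence whose increments have `U_Σ`-norms bounded by `ε / 2 ^ k`, countable subadditivity
gives `u - f n ∈ U_Σ` with `‖u - f n‖_{U_Σ} ≤ 2ε`. -/

open Filter
open scoped InnerProductSpace Topology

noncomputable section

variable {U : Type*} [NormedAddCommGroup U] [InnerProductSpace ℝ U] [CompleteSpace U]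

/-- The norm of `u` in the range of `S` (i.e. of `Q^{1/2}(U)` when `S = Q^{1/2}`):
`‖u‖ = inf { ‖v‖ : S v = u }`. -/
def rangeNorm (S : U →L[ℝ] U) (u : U) : ℝ :=
  sInf {r : ℝ | ∃ v : U, S v = u ∧ r = ‖v‖}

/-- Membership in `U_Σ`: `u` admits a representation `u = ∑ᵢ uᵢ` (convergent in `U`) with
`uᵢ ∈ Qᵢ^{1/2}(U)`, `Qᵢ ∈ Σ`, and `∑ᵢ ‖uᵢ‖_{Qᵢ^{1/2}(U)} < ∞`.  Here `R Q` denotes the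
positive square root `Q^{1/2}`. -/
def MemUSigma (Sig : Set (U →L[ℝ] U)) (R : (U →L[ℝ] U) → U →L[ℝ] U) (u : U) : Prop :=
  ∃ (Q : ℕ → U →L[ℝ] U) (v : ℕ → U),
    (∀ i, Q i ∈ Sig) ∧ (∀ i, v i ∈ Set.range (R (Q i))) ∧
    HasSum v u ∧ Summable (fun i => rangeNorm (R (Q i)) (v i))

/-- The norm on `U_Σ`: the infimum of `∑ᵢ ‖uᵢ‖_{Qᵢ^{1/2}(U)}` over all representations. -/
def normUSigma (Sig : Set (U →L[ℝ] U)) (R : (U →L[ℝ] U) → U →L[ℝ] U) (u : U) : ℝ :=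
  sInf {r : ℝ | ∃ (Q : ℕ → U →L[ℝ] U) (v : ℕ → U),
    (∀ i, Q i ∈ Sig) ∧ (∀ i, v i ∈ Set.range (R (Q i))) ∧
    HasSum v u ∧ Summable (fun i => rangeNorm (R (Q i)) (v i)) ∧
    r = ∑' i, rangeNorm (R (Q i)) (v i)}

open scoped Pointwise

lemma IsSelfAdjoint.norm_le_of_norm_mul_self_le {A : Type*} [NonUnitalNormedRing A] [StarRing A]
    [CStarRing A] {x : A} (hx : IsSelfAdjoint x) {C : ℝ} (hC : 0 ≤ C) (h : ‖x * x‖ ≤ C ^ 2) :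
    ‖x‖ ≤ C := by
  rw [hx.norm_mul_self] at h
  exact (pow_le_pow_iff_left₀ (norm_nonneg x) hC two_ne_zero).mp h

variable {E : Type*} [NormedAddCommGroup E] [InnerProductSpace ℝ E]

lemma rangeNorm_nonneg (S : E →L[ℝ] E) (u : E) : 0 ≤ rangeNorm S u :=
  Real.sInf_nonneg fun _ ⟨v, _, hr⟩ => hr ▸ norm_nonneg v

lemma rangeNorm_zero (S : E →L[ℝ] E) : rangeNorm S 0 = 0 :=
  le_antisymm
    (csInf_le ⟨0, fun _ ⟨v, _, hr⟩ => hr ▸ norm_nonneg v⟩ ⟨0, map_zero S, norm_zero.symm⟩)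
    (rangeNorm_nonneg S 0)

lemma norm_le_opNorm_mul_rangeNorm (S : E →L[ℝ] E) {u : E} (hu : u ∈ Set.range S) :
    ‖u‖ ≤ ‖S‖ * rangeNorm S u := by
  obtain ⟨w, rfl⟩ := hu
  rw [rangeNorm, ← smul_eq_mul, ← Real.sInf_smul_of_nonneg (norm_nonneg S)]
  refine le_csInf (Set.Nonempty.smul_set ⟨‖w‖, w, rfl, rfl⟩) ?_
  rintro _ ⟨_, ⟨v, hv, rfl⟩, rfl⟩
  rw [← hv]
  exact S.le_opNorm v

lemma rangeNorm_smul (S : E →L[ℝ] E) (c : ℝ) (u : E) :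
    rangeNorm S (c • u) = |c| * rangeNorm S u := by
  rcases eq_or_ne c 0 with rfl | hc
  · simp [rangeNorm_zero]
  have hset : {r : ℝ | ∃ v, S v = c • u ∧ r = ‖v‖} = |c| • {r : ℝ | ∃ v, S v = u ∧ r = ‖v‖} := by
    ext r
    constructor
    · rintro ⟨v, hv, rfl⟩
      refine Set.mem_smul_set.mpr ⟨‖c⁻¹ • v‖, ⟨c⁻¹ • v, ?_, rfl⟩, ?_⟩
      · rw [map_smul, hv, smul_smul, inv_mul_cancel₀ hc, one_smul]
      · rw [smul_eq_mul, norm_smul, Real.norm_eq_abs, abs_inv, ← mul_assoc,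
          mul_inv_cancel₀ (abs_ne_zero.mpr hc), one_mul]
    · rintro ⟨_, ⟨v, hv, rfl⟩, rfl⟩
      exact ⟨c • v, by rw [map_smul, hv], by simp [norm_smul]⟩
  rw [rangeNorm, hset, Real.sInf_smul_of_nonneg (abs_nonneg c), smul_eq_mul, rangeNorm]

section USigma

variable {Sig : Set (E →L[ℝ] E)} {R : (E →L[ℝ] E) → E →L[ℝ] E}

variable (Sig R) in
def reprSums (u : E) : Set ℝ :=
  {r : ℝ | ∃ (Q : ℕ → E →L[ℝ] E) (v : ℕ → E),
    (∀ i, Q i ∈ Sig) ∧ (∀ i, v i ∈ Set.range (R (Q i))) ∧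
    HasSum v u ∧ Summable (fun i => rangeNorm (R (Q i)) (v i)) ∧
    r = ∑' i, rangeNorm (R (Q i)) (v i)}

lemma normUSigma_eq_sInf_reprSums (u : E) : normUSigma Sig R u = sInf (reprSums Sig R u) := rfl

lemma memUSigma_iff_nonempty_reprSums {u : E} :
    MemUSigma Sig R u ↔ (reprSums Sig R u).Nonempty :=
  ⟨fun ⟨Q, v, hQ, hv, hsum, hsm⟩ => ⟨_, Q, v, hQ, hv, hsum, hsm, rfl⟩,
    fun ⟨_, Q, v, hQ, hv, hsum, hsm, _⟩ => ⟨Q, v, hQ, hv, hsum, hsm⟩⟩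

lemma nonneg_of_mem_reprSums {u : E} {r : ℝ} (h : r ∈ reprSums Sig R u) : 0 ≤ r := by
  obtain ⟨Q, v, -, -, -, -, rfl⟩ := h
  exact tsum_nonneg fun i => rangeNorm_nonneg _ _

lemma normUSigma_nonneg {u : E} : 0 ≤ normUSigma Sig R u :=
  Real.sInf_nonneg fun _ => nonneg_of_mem_reprSums

lemma normUSigma_le_of_mem_reprSums {u : E} {r : ℝ} (h : r ∈ reprSums Sig R u) :
    normUSigma Sig R u ≤ r :=
  csInf_le ⟨0, fun _ => nonneg_of_mem_reprSums⟩ h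

lemma zero_mem_reprSums_zero (hne : Sig.Nonempty) : (0 : ℝ) ∈ reprSums Sig R (0 : E) := by
  obtain ⟨Q₀, hQ₀⟩ := hne
  refine ⟨fun _ => Q₀, fun _ => 0, fun _ => hQ₀, fun _ => ⟨0, map_zero _⟩, hasSum_zero, ?_, ?_⟩
  all_goals simp [rangeNorm_zero]

lemma memUSigma_zero (hne : Sig.Nonempty) : MemUSigma Sig R (0 : E) :=
  memUSigma_iff_nonempty_reprSums.mpr ⟨0, zero_mem_reprSums_zero hne⟩

lemma normUSigma_zero (hne : Sig.Nonempty) : normUSigma Sig R (0 : E) = 0 :=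
  le_antisymm (normUSigma_le_of_mem_reprSums (zero_mem_reprSums_zero hne)) normUSigma_nonneg

lemma smul_mem_reprSums (c : ℝ) {u : E} {r : ℝ} (h : r ∈ reprSums Sig R u) :
    |c| * r ∈ reprSums Sig R (c • u) := by
  obtain ⟨Q, v, hQ, hv, hsum, hsm, rfl⟩ := h
  refine ⟨Q, fun i => c • v i, hQ, fun i => ?_, hsum.const_smul c, ?_, ?_⟩
  · obtain ⟨x, hx⟩ := hv i
    exact ⟨c • x, by rw [map_smul, hx]⟩
  · simpa only [rangeNorm_smul] using hsm.mul_left |c|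
  · simp only [rangeNorm_smul, tsum_mul_left]

lemma reprSums_smul {c : ℝ} (hc : c ≠ 0) (u : E) :
    reprSums Sig R (c • u) = |c| • reprSums Sig R u := by
  ext r
  constructor
  · intro h
    have h' := smul_mem_reprSums c⁻¹ h
    rw [smul_smul, inv_mul_cancel₀ hc, one_smul] at h'
    refine ⟨|c⁻¹| * r, h', ?_⟩
    dsimp only
    rw [smul_eq_mul, abs_inv, ← mul_assoc, mul_inv_cancel₀ (abs_ne_zero.mpr hc), one_mul]
  · rintro ⟨r', hr', rfl⟩
    exact smul_mem_reprSums c hr'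

lemma MemUSigma.smul {u : E} (hu : MemUSigma Sig R u) (c : ℝ) : MemUSigma Sig R (c • u) :=
  have ⟨_, hr⟩ := memUSigma_iff_nonempty_reprSums.mp hu
  memUSigma_iff_nonempty_reprSums.mpr ⟨_, smul_mem_reprSums c hr⟩

lemma normUSigma_smul (hne : Sig.Nonempty) (c : ℝ) (u : E) :
    normUSigma Sig R (c • u) = |c| * normUSigma Sig R u := by
  rcases eq_or_ne c 0 with rfl | hc
  · rw [zero_smul, normUSigma_zero hne, abs_zero, zero_mul]
  · rw [normUSigma_eq_sInf_reprSums, reprSums_smul hc, Real.sInf_smul_of_nonneg (abs_nonneg c),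
      smul_eq_mul, normUSigma_eq_sInf_reprSums]

lemma normUSigma_sub_comm (hne : Sig.Nonempty) (u v : E) :
    normUSigma Sig R (u - v) = normUSigma Sig R (v - u) := by
  rw [← neg_sub, ← neg_one_smul ℝ (v - u), normUSigma_smul hne, abs_neg, abs_one, one_mul]

variable {C : ℝ}

lemma norm_le_mul_of_mem_reprSums (hRC : ∀ Q ∈ Sig, ‖R Q‖ ≤ C) {u : E} {r : ℝ}
    (h : r ∈ reprSums Sig R u) : ‖u‖ ≤ C * r := by
  obtain ⟨Q, v, hQ, hv, hsum, hsm, rfl⟩ := h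
  have hbound : ∀ i, ‖v i‖ ≤ C * rangeNorm (R (Q i)) (v i) := fun i =>
    (norm_le_opNorm_mul_rangeNorm _ (hv i)).trans
      (mul_le_mul_of_nonneg_right (hRC _ (hQ i)) (rangeNorm_nonneg _ _))
  have hnorm : Summable fun i => ‖v i‖ :=
    (hsm.mul_left C).of_nonneg_of_le (fun i => norm_nonneg _) hbound
  calc ‖u‖ = ‖∑' i, v i‖ := by rw [hsum.tsum_eq]
    _ ≤ ∑' i, ‖v i‖ := norm_tsum_le_tsum_norm hnorm
    _ ≤ ∑' i, C * rangeNorm (R (Q i)) (v i) := hnorm.tsum_le_tsum hbound (hsm.mul_left C)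
    _ = C * ∑' i, rangeNorm (R (Q i)) (v i) := tsum_mul_left

lemma norm_le_mul_normUSigma (hRC : ∀ Q ∈ Sig, ‖R Q‖ ≤ C) (hC : 0 ≤ C) {u : E}
    (hu : MemUSigma Sig R u) : ‖u‖ ≤ C * normUSigma Sig R u := by
  rw [normUSigma_eq_sInf_reprSums, ← smul_eq_mul, ← Real.sInf_smul_of_nonneg hC]
  refine le_csInf ((memUSigma_iff_nonempty_reprSums.mp hu).smul_set) ?_
  rintro _ ⟨r, hr, rfl⟩
  exact norm_le_mul_of_mem_reprSums hRC hr

section Complete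

variable [CompleteSpace E]

lemma tsum_mem_reprSums (hRC : ∀ Q ∈ Sig, ‖R Q‖ ≤ C) {g : ℕ → E} {u : E} (hg : HasSum g u)
    {r : ℕ → ℝ} (hr : ∀ k, r k ∈ reprSums Sig R (g k)) (hrs : Summable r) :
    ∑' k, r k ∈ reprSums Sig R u := by
  choose Q v hQ hv hsum hsm hr_eq using hr
  obtain ⟨e⟩ : Nonempty (ℕ ≃ ℕ × ℕ) := ⟨(Denumerable.eqv (ℕ × ℕ)).symm⟩
  let F : ℕ × ℕ → ℝ := fun p => rangeNorm (R (Q p.1 p.2)) (v p.1 p.2)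
  let G : ℕ × ℕ → E := fun p => v p.1 p.2
  have hF : Summable F :=
    (summable_prod_of_nonneg fun p => rangeNorm_nonneg _ _).mpr ⟨hsm, by rwa [← funext hr_eq]⟩
  have hGF : ∀ p, ‖G p‖ ≤ C * F p := fun p =>
    (norm_le_opNorm_mul_rangeNorm _ (hv _ _)).trans
      (mul_le_mul_of_nonneg_right (hRC _ (hQ _ _)) (rangeNorm_nonneg _ _))
  have hG : Summable G := .of_norm <| (hF.mul_left C).of_nonneg_of_le (fun _ => norm_nonneg _) hGF
  have hGu : HasSum G u := by
    convert hG.hasSum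
    rw [hG.tsum_prod' fun k => (hsum k).summable, tsum_congr fun k => (hsum k).tsum_eq,
      hg.tsum_eq]
  refine ⟨fun n => Q (e n).1 (e n).2, fun n => G (e n), fun n => hQ _ _, fun n => hv _ _,
    e.hasSum_iff.mpr hGu, e.summable_iff.mpr hF, ?_⟩
  change _ = ∑' n, F (e n)
  rw [e.tsum_eq F, hF.tsum_prod' hsm, tsum_congr hr_eq]

lemma exists_mem_reprSums_le_of_hasSum (hRC : ∀ Q ∈ Sig, ‖R Q‖ ≤ C) {g : ℕ → E} {u : E}
    (hg : HasSum g u) (hgm : ∀ k, MemUSigma Sig R (g k)) {ε : ℕ → ℝ} {s : ℝ}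
    (hgε : ∀ k, normUSigma Sig R (g k) ≤ ε k) (hε : HasSum ε s) {δ : ℝ} (hδ : 0 < δ) :
    ∃ r ∈ reprSums Sig R u, r ≤ s + δ := by
  have happrox : ∀ k, ∃ r ∈ reprSums Sig R (g k), r < normUSigma Sig R (g k) + δ / 2 / 2 ^ k :=
    fun k => Real.lt_sInf_add_pos (memUSigma_iff_nonempty_reprSums.mp (hgm k)) (by positivity)
  choose r hr hr_lt using happrox
  have hr_le : ∀ k, r k ≤ ε k + δ / 2 / 2 ^ k := fun k => (hr_lt k).le.trans (by linarith [hgε k])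
  have hbound := hε.add (hasSum_geometric_two' δ)
  have hrs : Summable r :=
    hbound.summable.of_nonneg_of_le (fun k => nonneg_of_mem_reprSums (hr k)) hr_le
  exact ⟨_, tsum_mem_reprSums hRC hg hr hrs,
    hbound.tsum_eq ▸ hrs.tsum_le_tsum hr_le hbound.summable⟩

lemma memUSigma_and_normUSigma_le_of_hasSum (hRC : ∀ Q ∈ Sig, ‖R Q‖ ≤ C) {g : ℕ → E} {u : E}
    (hg : HasSum g u) (hgm : ∀ k, MemUSigma Sig R (g k)) {ε : ℕ → ℝ} {s : ℝ}
    (hgε : ∀ k, normUSigma Sig R (g k) ≤ ε k) (hε : HasSum ε s) :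
    MemUSigma Sig R u ∧ normUSigma Sig R u ≤ s := by
  refine ⟨?_, le_of_forall_pos_le_add fun δ hδ => ?_⟩
  · obtain ⟨r, hr, -⟩ := exists_mem_reprSums_le_of_hasSum hRC hg hgm hgε hε one_pos
    exact memUSigma_iff_nonempty_reprSums.mpr ⟨r, hr⟩
  · obtain ⟨r, hr, hrs⟩ := exists_mem_reprSums_le_of_hasSum hRC hg hgm hgε hε hδ
    exact (normUSigma_le_of_mem_reprSums hr).trans hrs

lemma memUSigma_add_and_normUSigma_add_le (hne : Sig.Nonempty) (hRC : ∀ Q ∈ Sig, ‖R Q‖ ≤ C)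
    {u v : E} (hu : MemUSigma Sig R u) (hv : MemUSigma Sig R v) :
    MemUSigma Sig R (u + v) ∧
      normUSigma Sig R (u + v) ≤ normUSigma Sig R u + normUSigma Sig R v := by
  let g : ℕ → E := fun k => if k = 0 then u else if k = 1 then v else 0
  have hsupp : ∀ k ∉ Finset.range 2, g k = 0 := fun k hk => by
    simp only [Finset.mem_range, not_lt] at hk
    simp only [g, if_neg (show k ≠ 0 by omega), if_neg (show k ≠ 1 by omega)]
  have hg : HasSum g (u + v) := by
    simpa [Finset.sum_range_succ, g] using hasSum_sum_of_ne_finset_zero hsupp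
  have hgm : ∀ k, MemUSigma Sig R (g k) := fun k => by
    simp only [g]
    split_ifs
    exacts [hu, hv, memUSigma_zero hne]
  have hN : HasSum (fun k => normUSigma Sig R (g k)) (normUSigma Sig R u + normUSigma Sig R v) := by
    have hNsupp : ∀ k ∉ Finset.range 2, normUSigma Sig R (g k) = 0 := fun k hk => by
      rw [hsupp k hk, normUSigma_zero hne]
    simpa [Finset.sum_range_succ, g] using hasSum_sum_of_ne_finset_zero hNsupp
  exact memUSigma_and_normUSigma_le_of_hasSum hRC hg hgm (fun _ => le_rfl) hN

lemma MemUSigma.add (hne : Sig.Nonempty) (hRC : ∀ Q ∈ Sig, ‖R Q‖ ≤ C) {u v : E}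
    (hu : MemUSigma Sig R u) (hv : MemUSigma Sig R v) : MemUSigma Sig R (u + v) :=
  (memUSigma_add_and_normUSigma_add_le hne hRC hu hv).1

lemma MemUSigma.sub (hne : Sig.Nonempty) (hRC : ∀ Q ∈ Sig, ‖R Q‖ ≤ C) {u v : E}
    (hu : MemUSigma Sig R u) (hv : MemUSigma Sig R v) : MemUSigma Sig R (u - v) := by
  simpa [sub_eq_add_neg] using hu.add hne hRC (hv.smul (-1))

lemma memUSigma_sub_and_normUSigma_sub_le_of_tendsto (hne : Sig.Nonempty)
    (hRC : ∀ Q ∈ Sig, ‖R Q‖ ≤ C) (hC : 0 ≤ C) {x : ℕ → E} {u : E}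
    (hx : Tendsto x atTop (𝓝 u)) (hxm : ∀ k, MemUSigma Sig R (x k)) {ε : ℕ → ℝ} {s : ℝ}
    (hxε : ∀ k, normUSigma Sig R (x (k + 1) - x k) ≤ ε k) (hε : HasSum ε s) :
    MemUSigma Sig R (u - x 0) ∧ normUSigma Sig R (u - x 0) ≤ s := by
  have hgm : ∀ k, MemUSigma Sig R (x (k + 1) - x k) := fun k => (hxm _).sub hne hRC (hxm _)
  have hgs : Summable fun k => x (k + 1) - x k :=
    .of_norm_bounded (hε.summable.mul_left C) fun k =>
      (norm_le_mul_normUSigma hRC hC (hgm k)).trans (mul_le_mul_of_nonneg_left (hxε k) hC)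
  have hg : HasSum (fun k => x (k + 1) - x k) (u - x 0) := by
    rw [hgs.hasSum_iff_tendsto_nat]
    simpa only [Finset.sum_range_sub] using hx.sub_const (x 0)
  exact memUSigma_and_normUSigma_le_of_hasSum hRC hg hgm hxε hε

lemma memUSigma_sub_and_normUSigma_sub_le_of_cauchy (hne : Sig.Nonempty)
    (hRC : ∀ Q ∈ Sig, ‖R Q‖ ≤ C) (hC : 0 ≤ C) {f : ℕ → E} (hf : ∀ n, MemUSigma Sig R (f n))
    (hcauchy : ∀ ε : ℝ, 0 < ε → ∃ N : ℕ, ∀ m ≥ N, ∀ n ≥ N, normUSigma Sig R (f m - f n) < ε)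
    {u : E} (hfu : Tendsto f atTop (𝓝 u)) {n : ℕ} {ε : ℝ} (hε : 0 < ε)
    (htail : ∀ a ≥ n, ∀ b ≥ n, normUSigma Sig R (f a - f b) < ε) :
    MemUSigma Sig R (u - f n) ∧ normUSigma Sig R (u - f n) ≤ 2 * ε := by
  obtain ⟨φ, hφ, hφ_tail⟩ := extraction_forall_of_eventually'
    (P := fun k j => n ≤ j ∧ ∀ a ≥ j, ∀ b ≥ j, normUSigma Sig R (f a - f b) < ε / 2 / 2 ^ k)
    fun k => by
      obtain ⟨N, hN⟩ := hcauchy (ε / 2 / 2 ^ k) (by positivity)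
      exact ⟨max n N, fun j hj => ⟨le_of_max_le_left hj,
        fun a ha b hb => hN a (le_of_max_le_right (hj.trans ha)) b
          (le_of_max_le_right (hj.trans hb))⟩⟩
  obtain ⟨hmem, hle⟩ := memUSigma_sub_and_normUSigma_sub_le_of_tendsto hne hRC hC
    (x := fun k => f (φ k)) (hfu.comp hφ.tendsto_atTop) (fun k => hf (φ k))
    (fun k => ((hφ_tail k).2 _ (hφ (Nat.lt_succ_self k)).le _ le_rfl).le)
    (hasSum_geometric_two' ε)
  have hhead : normUSigma Sig R (f (φ 0) - f n) < ε := htail _ (hφ_tail 0).1 _ le_rfl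
  rw [← sub_add_sub_cancel u (f (φ 0)) (f n)]
  obtain ⟨hmem', hle'⟩ :=
    memUSigma_add_and_normUSigma_add_le hne hRC hmem ((hf _).sub hne hRC (hf n))
  exact ⟨hmem', by linarith⟩

lemma cauchySeq_of_normUSigma (hne : Sig.Nonempty) (hRC : ∀ Q ∈ Sig, ‖R Q‖ ≤ C) (hC : 0 < C)
    {f : ℕ → E} (hf : ∀ n, MemUSigma Sig R (f n))
    (hcauchy : ∀ ε : ℝ, 0 < ε → ∃ N : ℕ, ∀ m ≥ N, ∀ n ≥ N, normUSigma Sig R (f m - f n) < ε) :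
    CauchySeq f := by
  refine Metric.cauchySeq_iff.mpr fun ε hε => ?_
  obtain ⟨N, hN⟩ := hcauchy (ε / C) (by positivity)
  refine ⟨N, fun m hm n hn => ?_⟩
  calc dist (f m) (f n) = ‖f m - f n‖ := dist_eq_norm _ _
    _ ≤ C * normUSigma Sig R (f m - f n) :=
      norm_le_mul_normUSigma hRC hC.le ((hf m).sub hne hRC (hf n))
    _ < C * (ε / C) := mul_lt_mul_of_pos_left (hN m hm n hn) hC
    _ = ε := mul_div_cancel₀ ε hC.ne'

lemma exists_tendsto_normUSigma_of_cauchy (hne : Sig.Nonempty) (hRC : ∀ Q ∈ Sig, ‖R Q‖ ≤ C)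
    (hC : 0 < C) {f : ℕ → E} (hf : ∀ n, MemUSigma Sig R (f n))
    (hcauchy : ∀ ε : ℝ, 0 < ε → ∃ N : ℕ, ∀ m ≥ N, ∀ n ≥ N, normUSigma Sig R (f m - f n) < ε) :
    ∃ u : E, MemUSigma Sig R u ∧ Tendsto (fun n => normUSigma Sig R (f n - u)) atTop (𝓝 0) := by
  obtain ⟨u, hfu⟩ := cauchySeq_tendsto_of_complete (cauchySeq_of_normUSigma hne hRC hC hf hcauchy)
  have key := fun (n : ℕ) (ε : ℝ) (hε : 0 < ε) htail =>
    memUSigma_sub_and_normUSigma_sub_le_of_cauchy hne hRC hC.le hf hcauchy hfu (n := n) hε htail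
  obtain ⟨N₁, hN₁⟩ := hcauchy 1 one_pos
  refine ⟨u, by simpa using (key N₁ 1 one_pos hN₁).1.add hne hRC (hf N₁), ?_⟩
  refine Metric.tendsto_atTop.mpr fun ε hε => ?_
  obtain ⟨N, hN⟩ := hcauchy (ε / 3) (by positivity)
  refine ⟨N, fun n hn => ?_⟩
  have hle := (key n (ε / 3) (by positivity) fun a ha b hb => hN a (hn.trans ha) b (hn.trans hb)).2
  rw [Real.dist_eq, sub_zero, abs_of_nonneg normUSigma_nonneg, normUSigma_sub_comm hne]
  linarith

end Complete

end USigma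

theorem uSigma_banach_general
    (Sig : Set (U →L[ℝ] U)) (hne : Sig.Nonempty)
    (C : ℝ) (hC : 0 < C) (hbdd : ∀ Q ∈ Sig, ‖Q‖ ≤ C ^ 2)
    (R : (U →L[ℝ] U) → U →L[ℝ] U)
    (hR : ∀ Q ∈ Sig, (R Q).IsPositive ∧ (R Q) ∘L (R Q) = Q) :
    -- `U_Σ` is a linear subspace of `U`
    (MemUSigma Sig R (0 : U)) ∧
    (∀ u v : U, MemUSigma Sig R u → MemUSigma Sig R v → MemUSigma Sig R (u + v)) ∧
    (∀ (c : ℝ) (u : U), MemUSigma Sig R u → MemUSigma Sig R (c • u)) ∧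
    -- `‖·‖_{U_Σ}` is a norm on `U_Σ`
    (∀ u : U, MemUSigma Sig R u → 0 ≤ normUSigma Sig R u) ∧
    (∀ u : U, MemUSigma Sig R u → (normUSigma Sig R u = 0 ↔ u = 0)) ∧
    (∀ u v : U, MemUSigma Sig R u → MemUSigma Sig R v →
       normUSigma Sig R (u + v) ≤ normUSigma Sig R u + normUSigma Sig R v) ∧
    (∀ (c : ℝ) (u : U), MemUSigma Sig R u →
       normUSigma Sig R (c • u) = |c| * normUSigma Sig R u) ∧
    -- `(U_Σ, ‖·‖_{U_Σ})` is complete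
    (∀ f : ℕ → U, (∀ n, MemUSigma Sig R (f n)) →
       (∀ ε : ℝ, 0 < ε → ∃ N : ℕ, ∀ m ≥ N, ∀ n ≥ N,
          normUSigma Sig R (f m - f n) < ε) →
       ∃ u : U, MemUSigma Sig R u ∧
         Tendsto (fun n => normUSigma Sig R (f n - u)) atTop (𝓝 0)) := by
  have hRC : ∀ Q ∈ Sig, ‖R Q‖ ≤ C := fun Q hQ =>
    (hR Q hQ).1.isSelfAdjoint.norm_le_of_norm_mul_self_le hC.le
      (by rw [ContinuousLinearMap.mul_def, (hR Q hQ).2]; exact hbdd Q hQ)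
  refine ⟨memUSigma_zero hne, fun u v hu hv => hu.add hne hRC hv, fun c u hu => hu.smul c,
    fun u _ => normUSigma_nonneg, fun u hu => ⟨fun h => ?_, fun h => h ▸ normUSigma_zero hne⟩,
    fun u v hu hv => (memUSigma_add_and_normUSigma_add_le hne hRC hu hv).2,
    fun c u _ => normUSigma_smul hne c u,
    fun f hf hcauchy => exists_tendsto_normUSigma_of_cauchy hne hRC hC hf hcauchy⟩
  simpa [h] using norm_le_mul_normUSigma hRC hC.le hu

/-- `U_Σ` is a linear subspace of `U`, `‖·‖_{U_Σ}` is a norm on it, and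
`(U_Σ, ‖·‖_{U_Σ})` is complete, i.e. a Banach space. -/
theorem uSigma_banach
    (bU : HilbertBasis ℕ ℝ U)
    (Sig : Set (U →L[ℝ] U)) (hne : Sig.Nonempty)
    (hpos : ∀ Q ∈ Sig, Q.IsPositive)
    (htc : ∀ Q ∈ Sig, Summable (fun i : ℕ => ⟪Q (bU i), bU i⟫_ℝ))
    (C : ℝ) (hC : 0 < C) (hbdd : ∀ Q ∈ Sig, ‖Q‖ ≤ C ^ 2)
    (R : (U →L[ℝ] U) → U →L[ℝ] U)
    (hR : ∀ Q ∈ Sig, (R Q).IsPositive ∧ (R Q) ∘L (R Q) = Q) :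
    -- `U_Σ` is a linear subspace of `U`
    (MemUSigma Sig R (0 : U)) ∧
    (∀ u v : U, MemUSigma Sig R u → MemUSigma Sig R v → MemUSigma Sig R (u + v)) ∧
    (∀ (c : ℝ) (u : U), MemUSigma Sig R u → MemUSigma Sig R (c • u)) ∧
    -- `‖·‖_{U_Σ}` is a norm on `U_Σ`
    (∀ u : U, MemUSigma Sig R u → 0 ≤ normUSigma Sig R u) ∧
    (∀ u : U, MemUSigma Sig R u → (normUSigma Sig R u = 0 ↔ u = 0)) ∧
    (∀ u v : U, MemUSigma Sig R u → MemUSigma Sig R v →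
       normUSigma Sig R (u + v) ≤ normUSigma Sig R u + normUSigma Sig R v) ∧
    (∀ (c : ℝ) (u : U), MemUSigma Sig R u →
       normUSigma Sig R (c • u) = |c| * normUSigma Sig R u) ∧
    -- `(U_Σ, ‖·‖_{U_Σ})` is complete
    (∀ f : ℕ → U, (∀ n, MemUSigma Sig R (f n)) →
       (∀ ε : ℝ, 0 < ε → ∃ N : ℕ, ∀ m ≥ N, ∀ n ≥ N,
          normUSigma Sig R (f m - f n) < ε) →
       ∃ u : U, MemUSigma Sig R u ∧
         Tendsto (fun n => normUSigma Sig R (f n - u)) atTop (𝓝 0)) :=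
  uSigma_banach_general Sig hne C hC hbdd R hR

end
end

section
/- Let H be a real separable Hilbert space, T > 0, α ∈ (0, 1/2), and m a positive integer with m > 1/(2α). Let S : [0,∞) → L(H) be strongly continuous (t ↦ S(t)x is continuous for every x ∈ H) and satisfy ‖S(t)‖_{L(H)} ≤ M·e^{at} for some constants M ≥ 1 and a ∈ ℝ. Then for every y ∈ L^{2m}([0,T]; H), the Bochner integral z(t) := ∫_0^t (t−s)^{α−1} S(t−s) y(s) ds is well defined for every t ∈ [0,T], and the function z : [0,T] → H is continuous. -/
/-!
Let `p = 2m` and let `q` be its conjugate exponent. The kernel `u ↦ u^(α-1)` lies in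
`L^q(0,T)` because `(1 - α) q < 1`, i.e. `α p > 1`. Hölder's inequality then bounds the
integrand of `z(t)` in `L^1` and gives `‖z(t)‖ ≤ ‖u^(α-1)‖_q · sup_[0,T] ‖S‖ · ‖y‖_p`
uniformly in `t ∈ [0,T]`. So `y ↦ z` is a bounded linear map from `L^p(0,T)` to functions
on `[0,T]` with the sup norm, and it is enough to prove continuity of `z` for continuous,
compactly supported `y`, which are dense in `L^p`. For such `y`, the substitution `u = t - s`
gives `z(t) = ∫_0^T 1_{u ≤ t} u^(α-1) S(u) y(t - u) du`. For every `u ≠ t` this integrand is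
continuous in `t`, so `z` is continuous by dominated convergence. Strong continuity together
with a locally bounded operator norm makes `(u, x) ↦ S(u) x` jointly continuous, which gives
the measurability needed throughout.
-/

open MeasureTheory Real Filter Set
open scoped ENNReal NNReal Topology

theorem continuous_uncurry_apply_of_norm_le {𝕜 X E F : Type*} [NontriviallyNormedField 𝕜]
    [TopologicalSpace X] [NormedAddCommGroup E] [NormedSpace 𝕜 E] [NormedAddCommGroup F]
    [NormedSpace 𝕜 F] {S : X → E →L[𝕜] F} {b : X → ℝ} (hS : ∀ x, Continuous fun u => S u x)
    (hb : Continuous b) (hSb : ∀ u, ‖S u‖ ≤ b u) :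
    Continuous fun p : X × E => S p.1 p.2 := by
  refine continuous_iff_continuousAt.2 fun ⟨u₀, x₀⟩ => ?_
  have hsmall : Tendsto (fun p : X × E => S p.1 (p.2 - x₀)) (𝓝 (u₀, x₀)) (𝓝 0) := by
    have hbound : Tendsto (fun p : X × E => b p.1 * ‖p.2 - x₀‖) (𝓝 (u₀, x₀)) (𝓝 0) := by
      simpa using (by fun_prop : Continuous fun p : X × E => b p.1 * ‖p.2 - x₀‖).tendsto (u₀, x₀)
    refine squeeze_zero_norm (fun p => ?_) hbound
    exact (S p.1).le_opNorm _ |>.trans (mul_le_mul_of_nonneg_right (hSb _) (norm_nonneg _))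
  simpa [ContinuousAt, ← map_add] using hsmall.add (((hS x₀).comp continuous_fst).tendsto (u₀, x₀))

theorem continuous_uncurry_apply_max_of_norm_le {E F : Type*} [NormedAddCommGroup E]
    [NormedSpace ℝ E] [NormedAddCommGroup F] [NormedSpace ℝ F] {S : ℝ → E →L[ℝ] F} {b : ℝ → ℝ}
    (hS : ∀ x, ContinuousOn (fun u => S u x) (Ici 0)) (hb : ContinuousOn b (Ici 0))
    (hSb : ∀ u, 0 ≤ u → ‖S u‖ ≤ b u) :
    Continuous fun p : ℝ × E => S (max p.1 0) p.2 :=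
  continuous_uncurry_apply_of_norm_le (S := fun u => S (max u 0)) (b := fun u => b (max u 0))
    (fun x => (hS x).comp_continuous (by fun_prop) fun u => le_max_right u 0)
    (hb.comp_continuous (by fun_prop) fun u => le_max_right u 0)
    fun u => hSb _ (le_max_right u 0)

theorem memLp_natCast_of_lintegral_pow_ne_top {X E : Type*} [MeasurableSpace X] {μ : Measure X}
    [NormedAddCommGroup E] {f : X → E} {n : ℕ} (hn : n ≠ 0) (hf : AEStronglyMeasurable f μ)
    (h : ∫⁻ x, (‖f x‖₊ : ℝ≥0∞) ^ n ∂μ ≠ ∞) : MemLp f n μ := by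
  refine ⟨hf, (eLpNorm_lt_top_iff_lintegral_rpow_enorm_lt_top (by exact_mod_cast hn)
    (ENNReal.natCast_ne_top n)).2 ?_⟩
  simpa only [ENNReal.toReal_natCast, ENNReal.rpow_natCast, enorm_eq_nnnorm] using h.lt_top

theorem memLp_rpow_Ioc {β : ℝ} {q : ℝ≥0∞} (T : ℝ) (hq0 : q ≠ 0) (hq : q ≠ ∞)
    (hβ : -1 < β * q.toReal) :
    MemLp (fun u : ℝ => u ^ β) q (volume.restrict (Ioc 0 T)) := by
  refine (integrable_norm_rpow_iff (by fun_prop) hq0 hq).1 ?_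
  refine (intervalIntegral.intervalIntegrable_rpow' hβ (a := 0) (b := T)).1.congr_fun
    (fun u hu => ?_) measurableSet_Ioc
  rw [norm_of_nonneg (rpow_nonneg hu.1.le _), ← rpow_mul hu.1.le]

theorem memLp_rpow_sub_one_Ioc {α p q : ℝ} (hpq : p.HolderConjugate q) (hαp : 1 < α * p)
    (T : ℝ) : MemLp (fun u : ℝ => u ^ (α - 1)) (ENNReal.ofReal q) (volume.restrict (Ioc 0 T)) := by
  refine memLp_rpow_Ioc T (ENNReal.ofReal_pos.2 hpq.symm.pos).ne' ENNReal.ofReal_ne_top ?_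
  rw [ENNReal.toReal_ofReal hpq.symm.nonneg]
  -- `p ((α - 1) q + 1) = q (α p - 1)` because `p q = p + q`
  nlinarith [hpq.mul_eq_add, hpq.pos, mul_pos hpq.symm.pos (sub_pos.2 hαp)]

theorem eLpNorm_comp_sub_left_le {E : Type*} [NormedAddCommGroup E] {g : ℝ → E} {t T : ℝ}
    (hg : AEStronglyMeasurable g volume) (ht : t ≤ T) (q : ℝ≥0∞) :
    eLpNorm (fun s => g (t - s)) q (volume.restrict (Ioc 0 t)) ≤
      eLpNorm g q (volume.restrict (Ioc 0 T)) := by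
  have hpre : (fun s : ℝ => t - s) ⁻¹' Ico 0 t = Ioc 0 t := by
    ext s
    simp only [mem_preimage, mem_Ico, mem_Ioc]
    constructor <;> rintro ⟨h₁, h₂⟩ <;> constructor <;> linarith
  have hmp : MeasurePreserving (fun s : ℝ => t - s) (volume.restrict (Ioc 0 t))
      (volume.restrict (Ico 0 t)) := by
    simpa only [hpre] using (Measure.measurePreserving_sub_left volume t).restrict_preimage_emb
      (MeasurableEquiv.subLeft t).measurableEmbedding (Ico 0 t)
  calc eLpNorm (fun s => g (t - s)) q (volume.restrict (Ioc 0 t))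
      = eLpNorm g q (volume.restrict (Ico 0 t)) := eLpNorm_comp_measurePreserving hg.restrict hmp
    _ = eLpNorm g q (volume.restrict (Ioc 0 t)) := by rw [Measure.restrict_congr_set Ico_ae_eq_Ioc]
    _ ≤ eLpNorm g q (volume.restrict (Ioc 0 T)) :=
        eLpNorm_mono_measure _ (Measure.restrict_mono (Ioc_subset_Ioc_right ht) le_rfl)

theorem continuous_integral_indicator_Ici {F : Type*} [NormedAddCommGroup F] [NormedSpace ℝ F]
    {μ : Measure ℝ} [NullSingletonClass μ] {Φ : ℝ → ℝ → F} {bound : ℝ → ℝ}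
    (hΦm : ∀ τ, AEStronglyMeasurable (fun u => Φ u τ) μ) (hΦc : ∀ u, Continuous (Φ u))
    (hΦb : ∀ᵐ u ∂μ, ∀ τ, ‖Φ u τ‖ ≤ bound u) (hb : Integrable bound μ) :
    Continuous fun τ => ∫ u, (Ici u).indicator (Φ u) τ ∂μ := by
  refine continuous_iff_continuousAt.2 fun τ₀ => continuousAt_of_dominated ?_ ?_ hb ?_
  · refine Eventually.of_forall fun τ => ?_
    exact (hΦm τ).indicator (s := Iic τ) measurableSet_Iic
  · exact Eventually.of_forall fun τ =>
      hΦb.mono fun u hu => (norm_indicator_le_norm_self _ _).trans (hu τ)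
  · filter_upwards [Measure.ae_ne μ τ₀] with u hu
    exact (hΦc u).continuousOn.continuousAt_indicator (by rw [frontier_Ici]; exact hu.symm)

section VolterraConv

variable {E F : Type*} [NormedAddCommGroup E] [NormedSpace ℝ E] [NormedAddCommGroup F]
  [NormedSpace ℝ F] {k : ℝ → ℝ} {S : ℝ → E →L[ℝ] F} {f g : ℝ → E} {T t C : ℝ} {K : ℝ≥0}
  {p q : ℝ≥0∞}

noncomputable def volterraConv (k : ℝ → ℝ) (S : ℝ → E →L[ℝ] F) (f : ℝ → E) (t : ℝ) : F :=
  ∫ s in Ioc 0 t, k (t - s) • S (t - s) (f s)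

theorem aestronglyMeasurable_volterra_integrand {μ : Measure ℝ} (hk : Measurable k)
    (hS : Continuous fun x : ℝ × E => S x.1 x.2) (hf : AEStronglyMeasurable f μ) :
    AEStronglyMeasurable (fun s => k (t - s) • S (t - s) (f s)) μ :=
  (hk.comp (measurable_const.sub measurable_id)).aestronglyMeasurable.smul
    (hS.comp_aestronglyMeasurable ((by fun_prop : Continuous fun s : ℝ => t - s)
      |>.aestronglyMeasurable.prodMk hf))

theorem volterraConv_eq_integral_indicator (ht0 : 0 ≤ t) (htT : t ≤ T) :
    volterraConv k S f t =
      ∫ u in Ioc 0 T, (Ici u).indicator (fun τ => k u • S u (f (τ - u))) t := by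
  have hsub := intervalIntegral.integral_comp_sub_left (a := 0) (b := t)
    (fun u => k u • S u (f (t - u))) t
  simp only [sub_sub_cancel, sub_self, sub_zero] at hsub
  calc volterraConv k S f t = ∫ u in Ioc 0 t, k u • S u (f (t - u)) := by
        rw [volterraConv, ← intervalIntegral.integral_of_le ht0, hsub,
          intervalIntegral.integral_of_le ht0]
    _ = ∫ u in Ioc 0 T ∩ Iic t, k u • S u (f (t - u)) := by rw [Ioc_inter_Iic, min_eq_right htT]
    _ = ∫ u in Ioc 0 T, (Iic t).indicator (fun u => k u • S u (f (t - u))) u :=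
        (setIntegral_indicator measurableSet_Iic).symm

theorem continuousOn_volterraConv_of_continuous (hk : Measurable k)
    (hki : IntegrableOn k (Ioc 0 T)) (hS : Continuous fun x : ℝ × E => S x.1 x.2)
    (hSK : ∀ u ∈ Icc 0 T, ‖S u‖ ≤ K) (hg : Continuous g) (hgC : ∀ s, ‖g s‖ ≤ C) :
    ContinuousOn (volterraConv k S g) (Icc 0 T) := by
  refine (continuous_integral_indicator_Ici (bound := fun u => ‖k u‖ * (K * C))
    (fun τ => ?_) (fun u => ?_) ?_ (hki.norm.mul_const _)).continuousOn.congr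
    fun t ht => volterraConv_eq_integral_indicator ht.1 ht.2
  · exact hk.aestronglyMeasurable.smul (hS.comp_aestronglyMeasurable
      (continuous_id.prodMk (hg.comp (continuous_const.sub continuous_id))).aestronglyMeasurable)
  · fun_prop
  · refine (ae_restrict_iff' measurableSet_Ioc).2 (Eventually.of_forall fun u hu τ => ?_)
    rw [norm_smul]
    gcongr
    exact (S u).le_opNorm _ |>.trans
      (mul_le_mul (hSK u ⟨hu.1.le, hu.2⟩) (hgC _) (norm_nonneg _) K.2)

theorem volterraConv_sub (hf : IntegrableOn (fun s => k (t - s) • S (t - s) (f s)) (Ioc 0 t))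
    (hg : IntegrableOn (fun s => k (t - s) • S (t - s) (g s)) (Ioc 0 t)) :
    volterraConv k S (f - g) t = volterraConv k S f t - volterraConv k S g t := by
  simp only [volterraConv, Pi.sub_apply, map_sub, smul_sub]
  exact integral_sub hf hg

variable [q.HolderConjugate p]

theorem eLpNorm_volterra_integrand_le (hk : Measurable k)
    (hS : Continuous fun x : ℝ × E => S x.1 x.2) (hSK : ∀ u ∈ Icc 0 T, ‖S u‖ ≤ K)
    (hf : AEStronglyMeasurable f (volume.restrict (Ioc 0 T))) (ht : t ≤ T) :
    eLpNorm (fun s => k (t - s) • S (t - s) (f s)) 1 (volume.restrict (Ioc 0 t)) ≤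
      eLpNorm k q (volume.restrict (Ioc 0 T)) * (K * eLpNorm f p (volume.restrict (Ioc 0 T))) := by
  have hμ : volume.restrict (Ioc 0 t) ≤ volume.restrict (Ioc 0 T) :=
    Measure.restrict_mono (Ioc_subset_Ioc_right ht) le_rfl
  have hSf : eLpNorm (fun s => S (t - s) (f s)) p (volume.restrict (Ioc 0 t)) ≤
      K * eLpNorm f p (volume.restrict (Ioc 0 T)) := by
    have hle : ∀ᵐ s ∂volume.restrict (Ioc 0 t), ‖S (t - s) (f s)‖ ≤ K * ‖f s‖ := by
      refine (ae_restrict_iff' measurableSet_Ioc).2 (Eventually.of_forall fun s hs => ?_)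
      refine (S _).le_opNorm _ |>.trans (mul_le_mul_of_nonneg_right (hSK _ ?_) (norm_nonneg _))
      constructor <;> linarith [hs.1, hs.2]
    refine (eLpNorm_le_mul_eLpNorm_of_ae_le_mul hle p).trans ?_
    rw [ENNReal.ofReal_coe_nnreal]
    gcongr
  calc eLpNorm (fun s => k (t - s) • S (t - s) (f s)) 1 (volume.restrict (Ioc 0 t))
      ≤ eLpNorm (fun s => k (t - s)) q (volume.restrict (Ioc 0 t)) *
          eLpNorm (fun s => S (t - s) (f s)) p (volume.restrict (Ioc 0 t)) :=
        eLpNorm_smul_le_mul_eLpNorm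
          (hS.comp_aestronglyMeasurable ((by fun_prop : Continuous fun s : ℝ => t - s)
            |>.aestronglyMeasurable.prodMk (hf.mono_measure hμ)))
          (hk.comp (measurable_const.sub measurable_id)).aestronglyMeasurable
    _ ≤ _ := by gcongr; exact eLpNorm_comp_sub_left_le hk.aestronglyMeasurable ht q

theorem integrableOn_volterra_integrand (hk : Measurable k)
    (hkq : MemLp k q (volume.restrict (Ioc 0 T))) (hS : Continuous fun x : ℝ × E => S x.1 x.2)
    (hSK : ∀ u ∈ Icc 0 T, ‖S u‖ ≤ K) (hf : MemLp f p (volume.restrict (Ioc 0 T))) (ht : t ≤ T) :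
    IntegrableOn (fun s => k (t - s) • S (t - s) (f s)) (Ioc 0 t) := by
  refine memLp_one_iff_integrable.1 ⟨aestronglyMeasurable_volterra_integrand hk hS
    (hf.1.mono_measure (Measure.restrict_mono (Ioc_subset_Ioc_right ht) le_rfl)), ?_⟩
  refine (eLpNorm_volterra_integrand_le (p := p) (q := q) hk hS hSK hf.1 ht).trans_lt ?_
  exact ENNReal.mul_lt_top hkq.2 (ENNReal.mul_lt_top ENNReal.coe_lt_top hf.2)

theorem norm_volterraConv_le (hk : Measurable k)
    (hkq : MemLp k q (volume.restrict (Ioc 0 T))) (hS : Continuous fun x : ℝ × E => S x.1 x.2)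
    (hSK : ∀ u ∈ Icc 0 T, ‖S u‖ ≤ K) (hf : MemLp f p (volume.restrict (Ioc 0 T))) (ht : t ≤ T) :
    ‖volterraConv k S f t‖ ≤ (eLpNorm k q (volume.restrict (Ioc 0 T))).toReal * K *
      (eLpNorm f p (volume.restrict (Ioc 0 T))).toReal := by
  have hfin := ENNReal.mul_lt_top hkq.2 (ENNReal.mul_lt_top (ENNReal.coe_lt_top (r := K)) hf.2)
  calc ‖volterraConv k S f t‖
      ≤ (eLpNorm (fun s => k (t - s) • S (t - s) (f s)) 1 (volume.restrict (Ioc 0 t))).toReal := by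
        rw [eLpNorm_one_eq_lintegral_enorm]
        simpa only [volterraConv, ofReal_norm] using
          norm_integral_le_lintegral_norm (fun s => k (t - s) • S (t - s) (f s))
    _ ≤ _ := ENNReal.toReal_mono hfin.ne (eLpNorm_volterra_integrand_le hk hS hSK hf.1 ht)
    _ = _ := by simp only [ENNReal.toReal_mul, ENNReal.coe_toReal, mul_assoc]

theorem continuousOn_volterraConv (hp : p ≠ ∞) (hk : Measurable k)
    (hkq : MemLp k q (volume.restrict (Ioc 0 T))) (hS : Continuous fun x : ℝ × E => S x.1 x.2)
    (hSK : ∀ u ∈ Icc 0 T, ‖S u‖ ≤ K) (hf : MemLp f p (volume.restrict (Ioc 0 T))) :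
    ContinuousOn (volterraConv k S f) (Icc 0 T) := by
  choose g hg_supp hg_approx hg_cont hg_mem using fun n : ℕ =>
    hf.exists_hasCompactSupport_eLpNorm_sub_le hp (ε := ENNReal.ofReal (1 / (n + 1)))
      (ENNReal.ofReal_pos.2 (by positivity)).ne'
  refine TendstoUniformlyOn.continuousOn (F := fun n => volterraConv k S (g n)) ?_
    (Frequently.of_forall (f := atTop) fun n => ?_)
  · set B := (eLpNorm k q (volume.restrict (Ioc 0 T))).toReal * K
    have hB : Tendsto (fun n : ℕ => B * (1 / ((n : ℝ) + 1))) atTop (𝓝 0) := by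
      simpa using tendsto_one_div_add_atTop_nhds_zero_nat.const_mul B
    refine Metric.tendstoUniformlyOn_iff.2 fun ε hε => ?_
    filter_upwards [hB.eventually_lt_const hε] with n hn t ht
    rw [dist_eq_norm, ← volterraConv_sub (integrableOn_volterra_integrand hk hkq hS hSK hf ht.2)
      (integrableOn_volterra_integrand hk hkq hS hSK (hg_mem n) ht.2)]
    calc _ ≤ B * (eLpNorm (f - g n) p (volume.restrict (Ioc 0 T))).toReal :=
          norm_volterraConv_le hk hkq hS hSK (hf.sub (hg_mem n)) ht.2
      _ ≤ B * (1 / (n + 1)) := by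
          gcongr; exact ENNReal.toReal_le_of_le_ofReal (by positivity) (hg_approx n)
      _ < ε := hn
  · obtain ⟨C, hC⟩ := (hg_cont n).bounded_above_of_compact_support (hg_supp n)
    exact continuousOn_volterraConv_of_continuous hk
      (hkq.integrable (ENNReal.HolderConjugate.one_le q p)) hS hSK (hg_cont n) hC

end VolterraConv

theorem factorization_integral_continuous_general
    {H : Type*} [NormedAddCommGroup H] [InnerProductSpace ℝ H]
    (T : ℝ)
    (α : ℝ) (hα0 : 0 < α)
    (m : ℕ) (hm : 0 < m) (hmα : 1 / (2 * α) < (m : ℝ))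
    (S : ℝ → H →L[ℝ] H)
    (hScont : ∀ x : H, ContinuousOn (fun t => S t x) (Set.Ici (0 : ℝ)))
    (M a : ℝ) (hM : 1 ≤ M)
    (hSbound : ∀ t : ℝ, 0 ≤ t → ‖S t‖ ≤ M * Real.exp (a * t))
    (y : ℝ → H)
    (hymeas : AEStronglyMeasurable y (volume.restrict (Set.Ioc (0 : ℝ) T)))
    (hyLp : ∫⁻ s in Set.Ioc (0 : ℝ) T, (‖y s‖₊ : ENNReal) ^ (2 * m) ≠ ⊤) :
    (∀ t ∈ Set.Icc (0 : ℝ) T,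
        IntegrableOn (fun s : ℝ => ((t - s) ^ (α - 1) : ℝ) • S (t - s) (y s))
          (Set.Ioc (0 : ℝ) t) volume) ∧
      ContinuousOn
        (fun t : ℝ => ∫ s in Set.Ioc (0 : ℝ) t, ((t - s) ^ (α - 1) : ℝ) • S (t - s) (y s))
        (Set.Icc (0 : ℝ) T) := by
  have hpq : ((2 * m : ℕ) : ℝ).HolderConjugate (Real.conjExponent (2 * m : ℕ)) :=
    .conjExponent (by norm_cast; omega)
  have : (ENNReal.ofReal (Real.conjExponent (2 * m : ℕ))).HolderConjugate (2 * m : ℕ) := by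
    simpa only [ENNReal.ofReal_natCast] using hpq.symm.ennrealOfReal
  have hαp : 1 < α * ((2 * m : ℕ) : ℝ) := by
    have := (div_lt_iff₀ (by positivity)).1 hmα
    push_cast
    linarith
  have hk : Measurable fun u : ℝ => u ^ (α - 1) := by fun_prop
  have hkq := memLp_rpow_sub_one_Ioc hpq hαp T
  have hy := memLp_natCast_of_lintegral_pow_ne_top (by omega) hymeas hyLp
  -- `S` is only controlled on `[0, ∞)`: extend it by `S 0` to negative times.
  set S' : ℝ → H →L[ℝ] H := fun u => S (max u 0)
  have hS' : Continuous fun x : ℝ × H => S' x.1 x.2 :=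
    continuous_uncurry_apply_max_of_norm_le hScont (by fun_prop) hSbound
  have hS'K : ∀ u ∈ Icc 0 T, ‖S' u‖ ≤ (⟨M * exp (|a| * T), by positivity⟩ : ℝ≥0) := by
    intro u hu
    have hexp : a * u ≤ |a| * T := mul_le_mul (le_abs_self a) hu.2 hu.1 (abs_nonneg a)
    simp only [S', max_eq_left hu.1]
    exact (hSbound u hu.1).trans (by gcongr)
  have hS'eq : ∀ t, EqOn (fun s => ((t - s) ^ (α - 1) : ℝ) • S' (t - s) (y s))
      (fun s => ((t - s) ^ (α - 1) : ℝ) • S (t - s) (y s)) (Ioc 0 t) := fun t s hs => by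
    simp only [S', max_eq_left (sub_nonneg.2 hs.2)]
  exact ⟨fun t ht => (integrableOn_volterra_integrand hk hkq hS' hS'K hy ht.2).congr_fun
      (hS'eq t) measurableSet_Ioc,
    (continuousOn_volterraConv (ENNReal.natCast_ne_top _) hk hkq hS' hS'K hy).congr fun t _ =>
      setIntegral_congr_fun measurableSet_Ioc (hS'eq t).symm⟩

/-- let `S` be a strongly continuous family of bounded operators on a real
separable Hilbert space `H` with `‖S(t)‖ ≤ M·e^{at}`, let `T > 0`, `α ∈ (0,1/2)` and `m` a
positive integer with `m > 1/(2α)`.  Then for every `y ∈ L^{2m}([0,T]; H)` the Bochner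
integral `z(t) = ∫_0^t (t−s)^{α−1} S(t−s) y(s) ds` is well defined for every `t ∈ [0,T]`
and `z` is continuous on `[0,T]`. -/
theorem factorization_integral_continuous
    {H : Type*} [NormedAddCommGroup H] [InnerProductSpace ℝ H] [CompleteSpace H]
    [SecondCountableTopology H]
    (T : ℝ) (hT : 0 < T)
    (α : ℝ) (hα0 : 0 < α) (hα1 : α < 1 / 2)
    (m : ℕ) (hm : 0 < m) (hmα : 1 / (2 * α) < (m : ℝ))
    (S : ℝ → H →L[ℝ] H)
    (hScont : ∀ x : H, ContinuousOn (fun t => S t x) (Set.Ici (0 : ℝ)))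
    (M a : ℝ) (hM : 1 ≤ M)
    (hSbound : ∀ t : ℝ, 0 ≤ t → ‖S t‖ ≤ M * Real.exp (a * t))
    (y : ℝ → H)
    (hymeas : AEStronglyMeasurable y (volume.restrict (Set.Ioc (0 : ℝ) T)))
    (hyLp : ∫⁻ s in Set.Ioc (0 : ℝ) T, (‖y s‖₊ : ENNReal) ^ (2 * m) ≠ ⊤) :
    (∀ t ∈ Set.Icc (0 : ℝ) T,
        IntegrableOn (fun s : ℝ => ((t - s) ^ (α - 1) : ℝ) • S (t - s) (y s))
          (Set.Ioc (0 : ℝ) t) volume) ∧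
      ContinuousOn
        (fun t : ℝ => ∫ s in Set.Ioc (0 : ℝ) t, ((t - s) ^ (α - 1) : ℝ) • S (t - s) (y s))
        (Set.Icc (0 : ℝ) T) :=
  factorization_integral_continuous_general T α hα0 m hm hmα S hScont M a hM hSbound y hymeas hyLp
end

section
/- Let Ω be a complete separable metric space with its Borel σ-algebra, 𝒫 a nonempty set of Borel probability measures on Ω, and c(A) := sup_{P∈𝒫} P(A) the associated capacity. Let E be a real Banach space and p ≥ 1. Consider the Borel-measurable maps X : Ω → E with ⦀X⦀_p := sup_{P∈𝒫} (∫_Ω ‖X‖^p dP)^{1/p} < ∞, where two maps are identified when they agree quasi-surely, i.e. when c({X ≠ Y}) = 0. Then the closure with respect to ⦀·⦀_p of the set of bounded continuous maps Ω → E equals the set of all X with ⦀X⦀_p < ∞ such that (i) X has a quasi-continuous version, and (ii) lim_{n→∞} sup_{P∈𝒫} ∫_Ω ‖X‖^p · 1_{{‖X‖ > n}} dP = 0. -/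
/-
If bounded continuous `Yₙ` converge to `X` in `⦀·⦀_p`, pass to a subsequence with
`⦀X - Yₙ⦀_p ≤ 4⁻ⁿ`. By Chebyshev's inequality the sets `{‖Yₙ - Yₙ₊₁‖ > 2⁻ⁿ}` are open with
summable capacities, so the `Yₙ` converge uniformly off open sets of arbitrarily small capacity
and their limit `Z` is quasi-continuous; by Borel–Cantelli they also converge `P`-a.s. to `X`
for every `P`, whence `X = Z` quasi-surely. Uniform integrability comes from
`‖X‖ ≤ 2 ‖X - Yₙ‖` on `{‖X‖ > 2 sup ‖Yₙ‖}`.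

Conversely, choose a level `r` beyond which the tail integrals of `‖X‖ᵖ` are small and an open
`O` of small capacity off which the quasi-continuous version `Z` is continuous. A Dugundji-type
extension of `Z` from the closed set `Oᶜ ∩ {‖Z‖ ≤ r}` is continuous, bounded by `r`, and
differs from `X` only on `O ∪ {‖X‖ > r}`, where the error is at most
`2ᵖ (∫_{‖X‖ > r} ‖X‖ᵖ + rᵖ c(O))`.
-/

open MeasureTheory Filter
open scoped ENNReal NNReal Topology

noncomputable section

variable {Ω : Type*} [MetricSpace Ω] [CompleteSpace Ω] [TopologicalSpace.SeparableSpace Ω]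
  [MeasurableSpace Ω] [BorelSpace Ω]
variable {E : Type*} [NormedAddCommGroup E] [NormedSpace ℝ E] [CompleteSpace E]
  [MeasurableSpace E] [BorelSpace E]

/-- The Choquet capacity associated with a family `Ps` of probability measures:
`c(A) = sup_{P∈Ps} P(A)`. -/
def capacity (Ps : Set (Measure Ω)) (A : Set Ω) : ℝ≥0∞ :=
  ⨆ P ∈ Ps, P A

/-- The norm `⦀X⦀_p = sup_{P∈Ps} (∫ ‖X‖^p dP)^{1/p}`, valued in `ℝ≥0∞`. -/
def supLpNorm (Ps : Set (Measure Ω)) (p : ℝ) (X : Ω → E) : ℝ≥0∞ :=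
  ⨆ P ∈ Ps, (∫⁻ ω, (‖X ω‖₊ : ℝ≥0∞) ^ p ∂P) ^ (1 / p)

/-- `X` is quasi-continuous with respect to the capacity of `Ps`: for every `ε > 0` there is
an open set `O` with `c(O) < ε` such that the restriction of `X` to `Oᶜ` is continuous. -/
def QuasiContinuous (Ps : Set (Measure Ω)) (X : Ω → E) : Prop :=
  ∀ ε : ℝ≥0∞, 0 < ε → ∃ O : Set Ω, IsOpen O ∧ capacity Ps O < ε ∧ ContinuousOn X Oᶜ

/-- `F` need not be second countable, so subtraction `F × F → F` need not be measurable;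
instead `(x, ω) ↦ X ω - g x` is continuous in `x` and measurable in `ω`. -/
theorem Measurable.sub_continuous {α F : Type*} [MeasurableSpace α] [TopologicalSpace α]
    [TopologicalSpace.MetrizableSpace α] [SecondCountableTopology α] [OpensMeasurableSpace α]
    [NormedAddCommGroup F] [MeasurableSpace F] [BorelSpace F]
    {X g : α → F} (hX : Measurable X) (hg : Continuous g) :
    Measurable fun ω => X ω - g ω := by
  have hmeas : Measurable (Function.uncurry fun (x ω : α) => X ω - g x) :=
    measurable_uncurry_of_continuous_of_measurable (fun ω => continuous_const.sub hg)
      (fun x => (continuous_id.sub continuous_const).measurable.comp hX)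
  exact hmeas.comp (measurable_id.prodMk measurable_id)

section SupLpNorm

variable {α : Type*} [MeasurableSpace α] {Ps : Set (Measure α)}
  {F : Type*} [NormedAddCommGroup F] {p : ℝ}

theorem measure_le_capacity {P : Measure α} (hP : P ∈ Ps) (A : Set α) :
    P A ≤ capacity Ps A :=
  le_iSup₂ (f := fun P (_ : P ∈ Ps) => P A) P hP

theorem capacity_eq_zero_iff {A : Set α} : capacity Ps A = 0 ↔ ∀ P ∈ Ps, P A = 0 := by
  simp only [capacity, ENNReal.iSup_eq_zero]

theorem capacity_iUnion_le (A : ℕ → Set α) :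
    capacity Ps (⋃ k, A k) ≤ ∑' k, capacity Ps (A k) :=
  iSup₂_le fun _ hP => (measure_iUnion_le A).trans
    (ENNReal.tsum_le_tsum fun k => measure_le_capacity hP (A k))

theorem ae_tendsto_of_tsum_measure_lt_norm_sub_ne_top {P : Measure α} {X : α → F}
    {Y : ℕ → α → F} (h : ∑' k, P {ω | 2⁻¹ ^ k < ‖X ω - Y k ω‖} ≠ ∞) :
    ∀ᵐ ω ∂P, Tendsto (fun k => Y k ω) atTop (𝓝 (X ω)) := by
  filter_upwards [ae_eventually_notMem h] with ω hω
  rw [tendsto_iff_norm_sub_tendsto_zero]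
  refine squeeze_zero' (.of_forall fun k => norm_nonneg _) (hω.mono fun k hk => ?_)
    (tendsto_pow_atTop_nhds_zero_of_lt_one (by norm_num) (by norm_num : (2⁻¹ : ℝ) < 1))
  rw [norm_sub_rev]
  exact not_lt.1 hk

theorem capacity_ne_limUnder_eq_zero {X : α → F} {Y : ℕ → α → F}
    (h : ∀ P ∈ Ps, ∀ᵐ ω ∂P, Tendsto (fun k => Y k ω) atTop (𝓝 (X ω))) :
    capacity Ps {ω | X ω ≠ limUnder atTop fun k => Y k ω} = 0 :=
  capacity_eq_zero_iff.2 fun P hP => ae_iff.1 <| (h P hP).mono fun _ hω =>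
    tendsto_nhds_unique hω (tendsto_nhds_limUnder ⟨_, hω⟩)

theorem lintegral_enorm_rpow_le_supLpNorm_rpow (hp : 0 < p) {P : Measure α} (hP : P ∈ Ps)
    (f : α → F) : ∫⁻ ω, ‖f ω‖ₑ ^ p ∂P ≤ supLpNorm Ps p f ^ p := by
  calc ∫⁻ ω, ‖f ω‖ₑ ^ p ∂P = ((∫⁻ ω, ‖f ω‖ₑ ^ p ∂P) ^ (1 / p)) ^ p := by
        rw [← ENNReal.rpow_mul, one_div_mul_cancel hp.ne', ENNReal.rpow_one]
    _ ≤ supLpNorm Ps p f ^ p := by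
        gcongr
        exact le_iSup₂ (f := fun P (_ : P ∈ Ps) => (∫⁻ ω, ‖f ω‖ₑ ^ p ∂P) ^ (1 / p)) P hP

theorem supLpNorm_le_of_forall_lintegral_le (hp : 0 < p) {f : α → F} {c : ℝ≥0∞}
    (h : ∀ P ∈ Ps, ∫⁻ ω, ‖f ω‖ₑ ^ p ∂P ≤ c) : supLpNorm Ps p f ≤ c ^ (1 / p) :=
  iSup₂_le fun P hP => ENNReal.rpow_le_rpow (h P hP) (by positivity)

theorem supLpNorm_le_ofReal_of_norm_le (hPs : ∀ P ∈ Ps, IsProbabilityMeasure P) (hp : 0 < p)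
    {f : α → F} {C : ℝ} (hC : ∀ ω, ‖f ω‖ ≤ C) : supLpNorm Ps p f ≤ ENNReal.ofReal C := by
  have hbound : ∀ P ∈ Ps, ∫⁻ ω, ‖f ω‖ₑ ^ p ∂P ≤ ENNReal.ofReal C ^ p := fun P hP => by
    have := hPs P hP
    calc ∫⁻ ω, ‖f ω‖ₑ ^ p ∂P ≤ ∫⁻ _, ENNReal.ofReal C ^ p ∂P := by
          gcongr with ω
          rw [← ofReal_norm]
          exact ENNReal.ofReal_le_ofReal (hC ω)
      _ = ENNReal.ofReal C ^ p := by simp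
  refine (supLpNorm_le_of_forall_lintegral_le hp hbound).trans_eq ?_
  rw [← ENNReal.rpow_mul, mul_one_div_cancel hp.ne', ENNReal.rpow_one]

theorem supLpNorm_le_add_of_norm_le [MeasurableSpace F] [OpensMeasurableSpace F] (hp : 1 ≤ p)
    {f g h : α → F} (hg : Measurable g) (hh : Measurable h)
    (hfgh : ∀ ω, ‖f ω‖ ≤ ‖g ω‖ + ‖h ω‖) :
    supLpNorm Ps p f ≤ supLpNorm Ps p g + supLpNorm Ps p h := by
  refine iSup₂_le fun P hP => ?_
  calc (∫⁻ ω, ‖f ω‖ₑ ^ p ∂P) ^ (1 / p)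
      ≤ (∫⁻ ω, ((fun ω => ‖g ω‖ₑ) + fun ω => ‖h ω‖ₑ) ω ^ p ∂P) ^ (1 / p) := by
        gcongr with ω
        rw [Pi.add_apply, ← ofReal_norm, ← ofReal_norm, ← ofReal_norm,
          ← ENNReal.ofReal_add (norm_nonneg _) (norm_nonneg _)]
        exact ENNReal.ofReal_le_ofReal (hfgh ω)
    _ ≤ (∫⁻ ω, ‖g ω‖ₑ ^ p ∂P) ^ (1 / p) + (∫⁻ ω, ‖h ω‖ₑ ^ p ∂P) ^ (1 / p) :=
        ENNReal.lintegral_Lp_add_le hg.enorm.aemeasurable hh.enorm.aemeasurable hp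
    _ ≤ supLpNorm Ps p g + supLpNorm Ps p h := by
        gcongr
        · exact le_iSup₂ (f := fun P (_ : P ∈ Ps) => (∫⁻ ω, ‖g ω‖ₑ ^ p ∂P) ^ (1 / p)) P hP
        · exact le_iSup₂ (f := fun P (_ : P ∈ Ps) => (∫⁻ ω, ‖h ω‖ₑ ^ p ∂P) ^ (1 / p)) P hP

theorem capacity_lt_norm_le [MeasurableSpace F] [OpensMeasurableSpace F] (hp : 0 < p)
    {f : α → F} (hf : Measurable f) {t : ℝ} (ht : 0 < t) :
    capacity Ps {ω | t < ‖f ω‖} ≤ (supLpNorm Ps p f / ENNReal.ofReal t) ^ p := by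
  have htp0 : ENNReal.ofReal t ^ p ≠ 0 := by positivity
  have htp : ENNReal.ofReal t ^ p ≠ ∞ := by finiteness
  refine iSup₂_le fun P hP => ?_
  rw [ENNReal.div_rpow_of_nonneg _ _ hp.le, ENNReal.le_div_iff_mul_le (.inl htp0) (.inl htp),
    mul_comm]
  calc ENNReal.ofReal t ^ p * P {ω | t < ‖f ω‖}
      ≤ ENNReal.ofReal t ^ p * P {ω | ENNReal.ofReal t ^ p ≤ ‖f ω‖ₑ ^ p} := by
        gcongr with ω
        intro hω
        rw [← ofReal_norm]
        exact ENNReal.rpow_le_rpow (ENNReal.ofReal_le_ofReal hω.le) hp.le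
    _ ≤ ∫⁻ ω, ‖f ω‖ₑ ^ p ∂P := mul_meas_ge_le_lintegral₀ (hf.enorm.pow_const p).aemeasurable _
    _ ≤ supLpNorm Ps p f ^ p := lintegral_enorm_rpow_le_supLpNorm_rpow hp hP f

theorem tsum_capacity_lt_norm_ne_top [MeasurableSpace F] [OpensMeasurableSpace F] (hp : 1 ≤ p)
    {f : ℕ → α → F} (hf : ∀ k, Measurable (f k)) {a : ℝ≥0∞} (ha : a ≠ ∞)
    (hfa : ∀ k, supLpNorm Ps p (f k) ≤ a * 2⁻¹ ^ (2 * k)) :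
    ∑' k, capacity Ps {ω | 2⁻¹ ^ k < ‖f k ω‖} ≠ ∞ := by
  have hterm : ∀ k, capacity Ps {ω | 2⁻¹ ^ k < ‖f k ω‖} ≤ a ^ p * 2⁻¹ ^ k := fun k => calc
    _ ≤ (supLpNorm Ps p (f k) / ENNReal.ofReal (2⁻¹ ^ k)) ^ p :=
        capacity_lt_norm_le (by linarith) (hf k) (by positivity)
    _ ≤ (a * 2⁻¹ ^ k) ^ p := by
        gcongr
        rw [ENNReal.ofReal_pow (by norm_num), ENNReal.ofReal_inv_of_pos two_pos,
          ENNReal.ofReal_ofNat]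
        refine ENNReal.div_le_of_le_mul ((hfa k).trans_eq ?_)
        rw [mul_assoc, ← pow_add, two_mul]
    _ = a ^ p * (2⁻¹ ^ k) ^ p := ENNReal.mul_rpow_of_nonneg _ _ (by linarith)
    _ ≤ a ^ p * 2⁻¹ ^ k := by
        gcongr
        exact ENNReal.rpow_le_self_of_le_one (pow_le_one₀ (by positivity) (by norm_num)) hp
  refine ne_top_of_le_ne_top ?_ (ENNReal.tsum_le_tsum hterm)
  rw [ENNReal.tsum_mul_left, ENNReal.tsum_geometric, ENNReal.one_sub_inv_two, inv_inv]
  exact ENNReal.mul_ne_top (ENNReal.rpow_ne_top_of_nonneg (by linarith) ha) ENNReal.ofNat_ne_top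

theorem iSup_setLIntegral_lt_norm_le [MeasurableSpace F] [OpensMeasurableSpace F] (hp : 0 < p)
    {X : α → F} (hX : Measurable X) {g : α → F} {C : ℝ}
    (hg : ∀ ω, ‖g ω‖ ≤ C) {N : ℝ} (hN : 2 * C ≤ N) :
    ⨆ P ∈ Ps, ∫⁻ ω in {ω | N < ‖X ω‖}, ‖X ω‖ₑ ^ p ∂P
      ≤ 2 ^ p * supLpNorm Ps p (fun ω => X ω - g ω) ^ p := by
  refine iSup₂_le fun P hP => ?_
  calc ∫⁻ ω in {ω | N < ‖X ω‖}, ‖X ω‖ₑ ^ p ∂P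
      ≤ ∫⁻ ω in {ω | N < ‖X ω‖}, 2 ^ p * ‖X ω - g ω‖ₑ ^ p ∂P := by
        refine setLIntegral_mono' (measurableSet_lt measurable_const hX.norm) fun ω hω => ?_
        have hle : ‖X ω‖ ≤ 2 * ‖X ω - g ω‖ := by
          linarith [norm_le_norm_add_norm_sub' (X ω) (g ω), hg ω, show N < ‖X ω‖ from hω]
        rw [← ENNReal.mul_rpow_of_nonneg _ _ hp.le, ← ofReal_norm, ← ofReal_norm,
          ← ENNReal.ofReal_ofNat 2, ← ENNReal.ofReal_mul zero_le_two]
        gcongr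
    _ ≤ ∫⁻ ω, 2 ^ p * ‖X ω - g ω‖ₑ ^ p ∂P := setLIntegral_le_lintegral _ _
    _ = 2 ^ p * ∫⁻ ω, ‖X ω - g ω‖ₑ ^ p ∂P := lintegral_const_mul' _ _ (by finiteness)
    _ ≤ 2 ^ p * supLpNorm Ps p (fun ω => X ω - g ω) ^ p := by
        gcongr
        exact lintegral_enorm_rpow_le_supLpNorm_rpow hp hP _

theorem tendsto_iSup_setLIntegral_lt_norm [MeasurableSpace F] [OpensMeasurableSpace F]
    (hp : 0 < p) {X : α → F} (hX : Measurable X) {Y : ℕ → α → F}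
    (hYb : ∀ n, ∃ C : ℝ, ∀ ω, ‖Y n ω‖ ≤ C)
    (hlim : Tendsto (fun n => supLpNorm Ps p fun ω => X ω - Y n ω) atTop (𝓝 0)) :
    Tendsto (fun N : ℕ => ⨆ P ∈ Ps, ∫⁻ ω in {ω | (N : ℝ) < ‖X ω‖}, ‖X ω‖ₑ ^ p ∂P)
      atTop (𝓝 0) := by
  have hlim' : Tendsto (fun n => 2 ^ p * supLpNorm Ps p (fun ω => X ω - Y n ω) ^ p)
      atTop (𝓝 0) := by
    simpa [ENNReal.zero_rpow_of_pos hp] using ENNReal.Tendsto.const_mul (a := 2 ^ p)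
      (((ENNReal.continuous_rpow_const (y := p)).tendsto 0).comp hlim) (.inr (by finiteness))
  rw [ENNReal.tendsto_nhds_zero]
  intro ε hε
  obtain ⟨n, hn⟩ := (hlim'.eventually (ge_mem_nhds hε)).exists
  obtain ⟨C, hC⟩ := hYb n
  filter_upwards [eventually_ge_atTop ⌈2 * C⌉₊] with N hN
  exact (iSup_setLIntegral_lt_norm_le hp hX hC (Nat.ceil_le.1 hN)).trans hn

end SupLpNorm

theorem tendstoUniformlyOn_limUnder_of_dist_le {γ β : Type*} [MetricSpace β] [CompleteSpace β]
    [Nonempty β] {Y : ℕ → γ → β} {s : Set γ} {m : ℕ}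
    (h : ∀ ω ∈ s, ∀ k, m ≤ k → dist (Y k ω) (Y (k + 1) ω) ≤ 2⁻¹ ^ k) :
    TendstoUniformlyOn Y (fun ω => limUnder atTop fun k => Y k ω) atTop s := by
  have hrate : ∀ ω ∈ s, ∀ k, dist (Y (k + m) ω) (limUnder atTop fun k => Y k ω)
      ≤ 2⁻¹ ^ m * 2⁻¹ ^ k / (1 - 2⁻¹) := by
    intro ω hω k
    have hgeom : ∀ j, dist (Y (j + m) ω) (Y (j + 1 + m) ω) ≤ 2⁻¹ ^ m * 2⁻¹ ^ j := fun j => by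
      rw [add_right_comm, ← pow_add, add_comm m]
      exact h ω hω _ le_add_self
    obtain ⟨a, ha⟩ := cauchySeq_tendsto_of_complete
      (cauchySeq_of_le_geometric 2⁻¹ _ (by norm_num) hgeom)
    have hlim := (tendsto_add_atTop_iff_nat (f := fun k => Y k ω) m).1 ha
    rw [tendsto_nhds_unique (tendsto_nhds_limUnder ⟨a, hlim⟩) hlim]
    exact dist_le_of_le_geometric_of_tendsto 2⁻¹ _ (by norm_num) hgeom ha k
  have hsmall : Tendsto (fun k : ℕ => 2⁻¹ ^ m * 2⁻¹ ^ k / (1 - 2⁻¹ : ℝ)) atTop (𝓝 0) := by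
    simpa using ((tendsto_pow_atTop_nhds_zero_of_lt_one (r := (2⁻¹ : ℝ)) (by norm_num)
      (by norm_num)).const_mul (2⁻¹ ^ m : ℝ)).div_const (1 - 2⁻¹ : ℝ)
  rw [Metric.tendstoUniformlyOn_iff]
  intro ε hε
  obtain ⟨K, hK⟩ := (hsmall.eventually (gt_mem_nhds hε)).exists
  filter_upwards [eventually_ge_atTop (K + m)] with n hn ω hω
  obtain ⟨k, rfl⟩ : ∃ k, n = k + m := ⟨n - m, by omega⟩
  rw [dist_comm]
  calc dist (Y (k + m) ω) _ ≤ 2⁻¹ ^ m * 2⁻¹ ^ k / (1 - 2⁻¹) := hrate ω hω k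
    _ ≤ 2⁻¹ ^ m * 2⁻¹ ^ K / (1 - 2⁻¹) := by
        gcongr 2⁻¹ ^ m * ?_ / _
        exact pow_le_pow_of_le_one (by norm_num) (by norm_num) (by omega)
    _ < ε := hK

theorem quasiContinuous_limUnder {α : Type*} [MetricSpace α] [MeasurableSpace α]
    {Ps : Set (Measure α)} {F : Type*} [NormedAddCommGroup F] [CompleteSpace F]
    {Y : ℕ → α → F} (hY : ∀ k, Continuous (Y k))
    (hsum : ∑' k, capacity Ps {ω | 2⁻¹ ^ k < ‖Y k ω - Y (k + 1) ω‖} ≠ ∞) :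
    QuasiContinuous Ps fun ω => limUnder atTop fun k => Y k ω := by
  intro ε hε
  obtain ⟨m, hm⟩ := ((ENNReal.tendsto_sum_nat_add _ hsum).eventually (gt_mem_nhds hε)).exists
  refine ⟨⋃ k, {ω | 2⁻¹ ^ (k + m) < ‖Y (k + m) ω - Y (k + m + 1) ω‖},
    isOpen_iUnion fun k => isOpen_lt continuous_const ((hY _).sub (hY _)).norm,
    (capacity_iUnion_le _).trans_lt hm, ?_⟩
  refine (tendstoUniformlyOn_limUnder_of_dist_le (m := m) fun ω hω k hk => ?_).continuousOn
    (Eventually.of_forall fun k => (hY k).continuousOn).frequently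
  obtain ⟨j, rfl⟩ : ∃ j, k = j + m := ⟨k - m, by omega⟩
  simp only [Set.mem_compl_iff, Set.mem_iUnion, Set.mem_ofPred_eq, not_exists, not_lt] at hω
  rw [dist_eq_norm]
  exact hω j

section Extension

open Metric

variable {α : Type*} [MetricSpace α] {F : Type*} [NormedAddCommGroup F] [NormedSpace ℝ F]

theorem norm_inv_tsum_smul_tsum_sub_le [CompleteSpace F] {w : ℕ → ℝ} {v : ℕ → F} {a : F} {ε : ℝ}
    (hw0 : ∀ k, 0 ≤ w k) (hw : Summable w) (hpos : 0 < ∑' k, w k)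
    (hv : ∀ k, 0 < w k → ‖v k - a‖ ≤ ε) :
    ‖(∑' k, w k)⁻¹ • ∑' k, w k • v k - a‖ ≤ ε := by
  have hterm : ∀ k, ‖w k • (v k - a)‖ ≤ w k * ε := fun k => by
    rcases (hw0 k).eq_or_lt with h | h
    · simp [← h]
    · rw [norm_smul, Real.norm_of_nonneg (hw0 k)]
      exact mul_le_mul_of_nonneg_left (hv k h) (hw0 k)
  have hsum : Summable fun k => w k • (v k - a) := .of_norm_bounded (hw.mul_right ε) hterm
  have hsplit : ∑' k, w k • v k = ∑' k, w k • (v k - a) + (∑' k, w k) • a := by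
    rw [← hw.tsum_smul_const, ← hsum.tsum_add (hw.smul_const a)]
    exact tsum_congr fun k => by rw [smul_sub, sub_add_cancel]
  rw [hsplit, smul_add, smul_smul, inv_mul_cancel₀ hpos.ne', one_smul, add_sub_cancel_right,
    norm_smul, Real.norm_of_nonneg (inv_nonneg.2 hpos.le), inv_mul_le_iff₀ hpos]
  exact tsum_of_norm_bounded (hw.hasSum.mul_right ε) hterm

def dugundjiWeight (C : Set α) (u : ℕ → α) (k : ℕ) (x : α) : ℝ :=
  2⁻¹ ^ k * min 1 (max 0 (2 * infDist x C - dist x (u k)))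

variable {C : Set α} {u : ℕ → α}

theorem dugundjiWeight_nonneg (k : ℕ) (x : α) : 0 ≤ dugundjiWeight C u k x :=
  mul_nonneg (by positivity) (le_min zero_le_one (le_max_left _ _))

theorem dugundjiWeight_le (k : ℕ) (x : α) : dugundjiWeight C u k x ≤ 2⁻¹ ^ k :=
  mul_le_of_le_one_right (by positivity) (min_le_left _ _)

theorem continuous_dugundjiWeight (k : ℕ) : Continuous (dugundjiWeight C u k) := by
  unfold dugundjiWeight
  fun_prop

theorem summable_dugundjiWeight (x : α) : Summable fun k => dugundjiWeight C u k x :=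
  .of_nonneg_of_le (dugundjiWeight_nonneg · x) (dugundjiWeight_le · x)
    (summable_geometric_of_lt_one (by norm_num) (by norm_num))

theorem dugundjiWeight_pos_iff {k : ℕ} {x : α} :
    0 < dugundjiWeight C u k x ↔ dist x (u k) < 2 * infDist x C := by
  simp only [dugundjiWeight, mul_pos_iff_of_pos_left (by positivity : (0 : ℝ) < 2⁻¹ ^ k),
    lt_min_iff, zero_lt_one, true_and, lt_max_iff, lt_irrefl, false_or, sub_pos]

theorem tsum_dugundjiWeight_pos (hC : IsClosed C) (hCne : C.Nonempty)
    (hu : C ⊆ closure (Set.range u)) {x : α} (hx : x ∉ C) :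
    0 < ∑' k, dugundjiWeight C u k x := by
  have hD : 0 < infDist x C := (hC.notMem_iff_infDist_pos hCne).1 hx
  obtain ⟨c, hc, hxc⟩ := (infDist_lt_iff hCne).1 (by linarith : infDist x C < 3 / 2 * infDist x C)
  obtain ⟨_, ⟨k, rfl⟩, hck⟩ := mem_closure_iff.1 (hu hc) _ (by linarith : 0 < infDist x C / 2)
  have hk : 0 < dugundjiWeight C u k x :=
    dugundjiWeight_pos_iff.2 (by linarith [dist_triangle x c (u k)])
  exact hk.trans_le ((summable_dugundjiWeight x).le_tsum k fun j _ => dugundjiWeight_nonneg j x)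

open Classical in
/-- Off `C`, an average of values of `W` at the points `u k` with
`dist x (u k) < 2 * infDist x C`; as `x` tends to a point `c ∈ C` these points tend to `c`,
which makes the extension continuous on the boundary of `C`. -/
def dugundjiExtension (C : Set α) (u : ℕ → α) (W : α → F) (x : α) : F :=
  if x ∈ C then W x
  else (∑' k, dugundjiWeight C u k x)⁻¹ • ∑' k, dugundjiWeight C u k x • W (u k)

variable {W : α → F}

theorem dugundjiExtension_of_mem {x : α} (hx : x ∈ C) : dugundjiExtension C u W x = W x :=
  if_pos hx

theorem dugundjiExtension_of_notMem {x : α} (hx : x ∉ C) :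
    dugundjiExtension C u W x =
      (∑' k, dugundjiWeight C u k x)⁻¹ • ∑' k, dugundjiWeight C u k x • W (u k) :=
  if_neg hx

theorem norm_dugundjiExtension_sub_le [CompleteSpace F] (hC : IsClosed C) (hCne : C.Nonempty)
    (hu : C ⊆ closure (Set.range u)) {x : α} (hx : x ∉ C) {a : F} {ε : ℝ}
    (h : ∀ k, dist x (u k) < 2 * infDist x C → ‖W (u k) - a‖ ≤ ε) :
    ‖dugundjiExtension C u W x - a‖ ≤ ε := by
  rw [dugundjiExtension_of_notMem hx]
  exact norm_inv_tsum_smul_tsum_sub_le (dugundjiWeight_nonneg · x) (summable_dugundjiWeight x)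
    (tsum_dugundjiWeight_pos hC hCne hu hx) fun k hk => h k (dugundjiWeight_pos_iff.1 hk)

theorem norm_dugundjiExtension_le [CompleteSpace F] (hC : IsClosed C) (hCne : C.Nonempty)
    (hu : C ⊆ closure (Set.range u)) (huC : ∀ k, u k ∈ C) {r : ℝ} (hWr : ∀ y ∈ C, ‖W y‖ ≤ r)
    (x : α) : ‖dugundjiExtension C u W x‖ ≤ r := by
  by_cases hx : x ∈ C
  · rw [dugundjiExtension_of_mem hx]
    exact hWr x hx
  · simpa using norm_dugundjiExtension_sub_le (W := W) (a := 0) hC hCne hu hx fun k _ => by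
      simpa using hWr _ (huC k)

theorem continuousAt_dugundjiExtension_of_notMem [CompleteSpace F] (hC : IsClosed C)
    (hCne : C.Nonempty) (hu : C ⊆ closure (Set.range u)) {r : ℝ} (hWr : ∀ k, ‖W (u k)‖ ≤ r)
    {x : α} (hx : x ∉ C) : ContinuousAt (dugundjiExtension C u W) x := by
  have hgeom : Summable fun k : ℕ => (2⁻¹ : ℝ) ^ k :=
    summable_geometric_of_lt_one (by norm_num) (by norm_num)
  have hS : Continuous fun y => ∑' k, dugundjiWeight C u k y :=
    continuous_tsum continuous_dugundjiWeight hgeom fun k y => by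
      rw [Real.norm_of_nonneg (dugundjiWeight_nonneg k y)]
      exact dugundjiWeight_le k y
  have hN : Continuous fun y => ∑' k, dugundjiWeight C u k y • W (u k) :=
    continuous_tsum (fun k => (continuous_dugundjiWeight k).smul continuous_const)
      (hgeom.mul_right r) fun k y => by
      rw [norm_smul, Real.norm_of_nonneg (dugundjiWeight_nonneg k y)]
      exact mul_le_mul (dugundjiWeight_le k y) (hWr k) (norm_nonneg _) (by positivity)
  refine ((hS.continuousAt.inv₀ (tsum_dugundjiWeight_pos hC hCne hu hx).ne').smul
    hN.continuousAt).congr ?_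
  filter_upwards [hC.isOpen_compl.mem_nhds hx] with y hy
  rw [dugundjiExtension_of_notMem hy]
  rfl

theorem continuousAt_dugundjiExtension_of_mem [CompleteSpace F] (hC : IsClosed C)
    (hCne : C.Nonempty) (hu : C ⊆ closure (Set.range u)) (huC : ∀ k, u k ∈ C) {x : α} (hx : x ∈ C)
    (hW : ContinuousWithinAt W C x) : ContinuousAt (dugundjiExtension C u W) x := by
  rw [Metric.continuousAt_iff]
  intro ε hε
  obtain ⟨δ, hδ, hWδ⟩ := Metric.continuousWithinAt_iff.1 hW (ε / 2) (by linarith)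
  refine ⟨δ / 3, by linarith, fun {y} hy => ?_⟩
  rw [dugundjiExtension_of_mem hx]
  by_cases hyC : y ∈ C
  · rw [dugundjiExtension_of_mem hyC]
    exact (hWδ hyC (by linarith)).trans (by linarith)
  · rw [dist_eq_norm]
    refine lt_of_le_of_lt
      (norm_dugundjiExtension_sub_le (ε := ε / 2) hC hCne hu hyC fun k hk => ?_) (by linarith)
    have hyx : infDist y C ≤ dist y x := infDist_le_dist_of_mem hx
    rw [← dist_eq_norm]
    exact (hWδ (huC k) (by linarith [dist_triangle (u k) y x, dist_comm y (u k)])).le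

theorem IsClosed.exists_continuous_extension_norm_le [TopologicalSpace.SeparableSpace α]
    [CompleteSpace F] (hC : IsClosed C) (hW : ContinuousOn W C) {r : ℝ} (hr : 0 ≤ r)
    (hWr : ∀ x ∈ C, ‖W x‖ ≤ r) :
    ∃ g : α → F, Continuous g ∧ (∀ x, ‖g x‖ ≤ r) ∧ Set.EqOn g W C := by
  rcases C.eq_empty_or_nonempty with rfl | hCne
  · exact ⟨0, continuous_const, fun _ => by simpa using hr, Set.eqOn_empty _ _⟩
  obtain ⟨t, htC, htc, hCt⟩ :=
    (TopologicalSpace.IsSeparable.of_separableSpace C).exists_countable_dense_subset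
  obtain ⟨u, rfl⟩ := htc.exists_eq_range (closure_nonempty_iff.1 (hCne.mono hCt))
  have huC : ∀ k, u k ∈ C := fun k => htC (Set.mem_range_self k)
  refine ⟨dugundjiExtension C u W, continuous_iff_continuousAt.2 fun x => ?_,
    norm_dugundjiExtension_le hC hCne hCt huC hWr, fun _ => dugundjiExtension_of_mem⟩
  by_cases hx : x ∈ C
  · exact continuousAt_dugundjiExtension_of_mem hC hCne hCt huC hx (hW x hx)
  · exact continuousAt_dugundjiExtension_of_notMem hC hCne hCt (fun k => hWr _ (huC k)) hx

end Extension

theorem enorm_sub_rpow_le {F : Type*} [NormedAddCommGroup F] {p : ℝ} (hp : 0 ≤ p) (x : F)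
    {y : F} {r : ℝ} (hy : ‖y‖ ≤ r) :
    ‖x - y‖ₑ ^ p ≤ 2 ^ p * ENNReal.ofReal (max ‖x‖ r) ^ p := by
  rw [← ENNReal.mul_rpow_of_nonneg _ _ hp, ← ofReal_norm, ← ENNReal.ofReal_ofNat 2,
    ← ENNReal.ofReal_mul zero_le_two]
  gcongr
  linarith [norm_sub_le x y, le_max_left ‖x‖ r, le_max_right ‖x‖ r]

theorem enorm_sub_rpow_le_indicator_add_indicator {α F : Type*} [NormedAddCommGroup F]
    {p : ℝ} (hp : 0 < p) {X g : α → F} {O : Set α} {r : ℝ} {ω : α} (hg : ‖g ω‖ ≤ r)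
    (hXg : ω ∉ O → ‖X ω‖ ≤ r → g ω = X ω) :
    ‖X ω - g ω‖ₑ ^ p ≤ 2 ^ p * ({ω | r < ‖X ω‖}.indicator (fun ω => ‖X ω‖ₑ ^ p) ω
      + O.indicator (fun _ => ENNReal.ofReal r ^ p) ω) := by
  by_cases hXr : r < ‖X ω‖
  · calc ‖X ω - g ω‖ₑ ^ p ≤ 2 ^ p * ‖X ω‖ₑ ^ p := by
          simpa [max_eq_left hXr.le] using enorm_sub_rpow_le hp.le (X ω) hg
      _ ≤ _ := by
          rw [Set.indicator_of_mem (show ω ∈ {ω | r < ‖X ω‖} from hXr)]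
          gcongr
          exact le_self_add
  by_cases hωO : ω ∈ O
  · calc ‖X ω - g ω‖ₑ ^ p ≤ 2 ^ p * ENNReal.ofReal r ^ p := by
          simpa [max_eq_right (not_lt.1 hXr)] using enorm_sub_rpow_le hp.le (X ω) hg
      _ ≤ _ := by
          rw [Set.indicator_of_mem hωO]
          gcongr
          exact le_add_self
  rw [hXg hωO (not_lt.1 hXr), sub_self, enorm_zero, ENNReal.zero_rpow_of_pos hp]
  exact zero_le

section Closure

variable {α : Type*} [MetricSpace α] [TopologicalSpace.SeparableSpace α] [MeasurableSpace α]
  [OpensMeasurableSpace α] {Ps : Set (Measure α)}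
  {F : Type*} [NormedAddCommGroup F] [MeasurableSpace F] [BorelSpace F] {p : ℝ}
  {X : α → F}

theorem supLpNorm_lt_top_of_tendsto {Y : ℕ → α → F} (hPs : ∀ P ∈ Ps, IsProbabilityMeasure P)
    (hp : 1 ≤ p) (hX : Measurable X) (hYc : ∀ n, Continuous (Y n))
    (hYb : ∀ n, ∃ C : ℝ, ∀ ω, ‖Y n ω‖ ≤ C)
    (hlim : Tendsto (fun n => supLpNorm Ps p fun ω => X ω - Y n ω) atTop (𝓝 0)) :
    supLpNorm Ps p X < ∞ := by
  obtain ⟨n, hn⟩ := (hlim.eventually (gt_mem_nhds ENNReal.zero_lt_top)).exists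
  obtain ⟨C, hC⟩ := hYb n
  calc supLpNorm Ps p X ≤ supLpNorm Ps p (fun ω => X ω - Y n ω) + supLpNorm Ps p (Y n) :=
        supLpNorm_le_add_of_norm_le hp (hX.sub_continuous (hYc n)) (hYc n).measurable
          fun ω => (norm_le_norm_add_norm_sub' (X ω) (Y n ω)).trans_eq (add_comm _ _)
    _ < ∞ := ENNReal.add_lt_top.2 ⟨hn,
        (supLpNorm_le_ofReal_of_norm_le hPs (by linarith) hC).trans_lt ENNReal.ofReal_lt_top⟩

theorem exists_quasiContinuous_version_of_tendsto [CompleteSpace F] {Y : ℕ → α → F}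
    (hp : 1 ≤ p) (hX : Measurable X) (hYc : ∀ n, Continuous (Y n))
    (hlim : Tendsto (fun n => supLpNorm Ps p fun ω => X ω - Y n ω) atTop (𝓝 0)) :
    ∃ Z : α → F, QuasiContinuous Ps Z ∧ capacity Ps {ω | X ω ≠ Z ω} = 0 := by
  choose n hn using fun k : ℕ => (hlim.eventually (ge_mem_nhds
    (show (0 : ℝ≥0∞) < 2⁻¹ ^ (2 * k) by simp [ENNReal.pow_pos]))).exists
  have hdiff : ∀ k, supLpNorm Ps p (fun ω => Y (n k) ω - Y (n (k + 1)) ω)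
      ≤ 2 * 2⁻¹ ^ (2 * k) := fun k => calc
    _ ≤ supLpNorm Ps p (fun ω => X ω - Y (n k) ω)
          + supLpNorm Ps p (fun ω => X ω - Y (n (k + 1)) ω) :=
        supLpNorm_le_add_of_norm_le hp (hX.sub_continuous (hYc _)) (hX.sub_continuous (hYc _))
          fun ω => (norm_sub_le_norm_sub_add_norm_sub _ (X ω) _).trans_eq
            (by rw [norm_sub_rev (Y (n k) ω)])
    _ ≤ 2⁻¹ ^ (2 * k) + 2⁻¹ ^ (2 * (k + 1)) := add_le_add (hn k) (hn (k + 1))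
    _ ≤ 2 * 2⁻¹ ^ (2 * k) := by
        rw [two_mul (2⁻¹ ^ (2 * k))]
        exact add_le_add le_rfl (pow_le_pow_right_of_le_one' (by norm_num) (by omega))
  refine ⟨_, quasiContinuous_limUnder (fun k => hYc (n k))
      (tsum_capacity_lt_norm_ne_top hp (fun k => ((hYc _).sub (hYc _)).measurable)
        ENNReal.ofNat_ne_top hdiff),
    capacity_ne_limUnder_eq_zero fun P hP => ae_tendsto_of_tsum_measure_lt_norm_sub_ne_top ?_⟩
  exact ne_top_of_le_ne_top (tsum_capacity_lt_norm_ne_top hp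
      (fun k => hX.sub_continuous (hYc (n k))) ENNReal.one_ne_top fun k => (hn k).trans_eq
        (one_mul _).symm)
    (ENNReal.tsum_le_tsum fun k => measure_le_capacity hP _)

theorem exists_bounded_continuous_lintegral_sub_le [NormedSpace ℝ F] [CompleteSpace F]
    {Z : α → F} (hp : 0 < p) (hX : Measurable X)
    (hZ : QuasiContinuous Ps Z) (hXZ : capacity Ps {ω | X ω ≠ Z ω} = 0) {r : ℝ} (hr : 0 ≤ r)
    {δ : ℝ≥0∞} (hδ : 0 < δ) (hUI : ⨆ P ∈ Ps, ∫⁻ ω in {ω | r < ‖X ω‖}, ‖X ω‖ₑ ^ p ∂P ≤ δ) :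
    ∃ g : α → F, Continuous g ∧ (∀ ω, ‖g ω‖ ≤ r) ∧
      ∀ P ∈ Ps, ∫⁻ ω, ‖X ω - g ω‖ₑ ^ p ∂P ≤ 2 ^ p * (δ + δ) := by
  set rp := ENNReal.ofReal r ^ p
  obtain ⟨O, hO, hOcap, hZO⟩ := hZ (δ / rp) (ENNReal.div_pos hδ.ne' (by finiteness))
  have hK : IsClosed (Oᶜ ∩ Z ⁻¹' Metric.closedBall 0 r) :=
    hZO.preimage_isClosed_of_isClosed hO.isClosed_compl Metric.isClosed_closedBall
  obtain ⟨g, hg, hgr, hgK⟩ := hK.exists_continuous_extension_norm_le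
    (hZO.mono Set.inter_subset_left) hr fun ω hω => mem_closedBall_zero_iff.1 hω.2
  refine ⟨g, hg, hgr, fun P hP => ?_⟩
  set A := {ω | r < ‖X ω‖}
  have hA : MeasurableSet A := measurableSet_lt measurable_const hX.norm
  have hpoint : ∀ᵐ ω ∂P, ‖X ω - g ω‖ₑ ^ p
      ≤ 2 ^ p * (A.indicator (fun ω => ‖X ω‖ₑ ^ p) ω + O.indicator (fun _ => rp) ω) := by
    filter_upwards [ae_iff.2 (capacity_eq_zero_iff.1 hXZ P hP)] with ω (hω : X ω = Z ω)
    refine enorm_sub_rpow_le_indicator_add_indicator hp (hgr ω) fun hωO hXr => ?_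
    rw [hgK ⟨hωO, mem_closedBall_zero_iff.2 (hω ▸ hXr)⟩, hω]
  calc ∫⁻ ω, ‖X ω - g ω‖ₑ ^ p ∂P
      ≤ ∫⁻ ω, 2 ^ p * (A.indicator (fun ω => ‖X ω‖ₑ ^ p) ω + O.indicator (fun _ => rp) ω) ∂P :=
        lintegral_mono_ae hpoint
    _ = 2 ^ p * (∫⁻ ω in A, ‖X ω‖ₑ ^ p ∂P + rp * P O) := by
        rw [lintegral_const_mul' _ _ (by finiteness),
          lintegral_add_left ((hX.enorm.pow_const p).indicator hA), lintegral_indicator hA,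
          lintegral_indicator_const hO.measurableSet]
    _ ≤ 2 ^ p * (δ + δ) := by
        gcongr
        · exact (le_iSup₂ (f := fun P (_ : P ∈ Ps) => ∫⁻ ω in A, ‖X ω‖ₑ ^ p ∂P) P hP).trans hUI
        · calc rp * P O ≤ rp * (δ / rp) := by
                gcongr
                exact (measure_le_capacity hP O).trans hOcap.le
            _ ≤ δ := ENNReal.mul_div_le

theorem exists_bounded_continuous_tendsto_supLpNorm_sub [NormedSpace ℝ F] [CompleteSpace F]
    {Z : α → F} (hp : 0 < p) (hX : Measurable X) (hZ : QuasiContinuous Ps Z)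
    (hXZ : capacity Ps {ω | X ω ≠ Z ω} = 0)
    (hUI : Tendsto (fun N : ℕ => ⨆ P ∈ Ps, ∫⁻ ω in {ω | (N : ℝ) < ‖X ω‖}, ‖X ω‖ₑ ^ p ∂P)
      atTop (𝓝 0)) :
    ∃ Y : ℕ → α → F, (∀ n, Continuous (Y n)) ∧ (∀ n, ∃ C : ℝ, ∀ ω, ‖Y n ω‖ ≤ C) ∧
      Tendsto (fun n => supLpNorm Ps p fun ω => X ω - Y n ω) atTop (𝓝 0) := by
  have happrox : ∀ n : ℕ, ∃ g : α → F, Continuous g ∧ (∃ C : ℝ, ∀ ω, ‖g ω‖ ≤ C) ∧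
      supLpNorm Ps p (fun ω => X ω - g ω)
        ≤ (2 ^ p * ((n : ℝ≥0∞)⁻¹ + (n : ℝ≥0∞)⁻¹)) ^ (1 / p) := fun n => by
    have hδ : 0 < (n : ℝ≥0∞)⁻¹ := ENNReal.inv_pos.2 (ENNReal.natCast_ne_top n)
    obtain ⟨N, hN⟩ := (hUI.eventually (ge_mem_nhds hδ)).exists
    obtain ⟨g, hg, hgN, hgX⟩ :=
      exists_bounded_continuous_lintegral_sub_le hp hX hZ hXZ N.cast_nonneg hδ hN
    exact ⟨g, hg, ⟨N, hgN⟩, supLpNorm_le_of_forall_lintegral_le hp hgX⟩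
  choose Y hYc hYb hYX using happrox
  refine ⟨Y, hYc, hYb, tendsto_of_tendsto_of_tendsto_of_le_of_le tendsto_const_nhds ?_
    (fun _ => zero_le) hYX⟩
  have hbound : Tendsto (fun n : ℕ => 2 ^ p * ((n : ℝ≥0∞)⁻¹ + (n : ℝ≥0∞)⁻¹)) atTop (𝓝 0) := by
    simpa using ENNReal.Tendsto.const_mul (a := 2 ^ p)
      (ENNReal.tendsto_inv_nat_nhds_zero.add ENNReal.tendsto_inv_nat_nhds_zero)
      (.inr (by finiteness))
  have hroot := ((ENNReal.continuous_rpow_const (y := 1 / p)).tendsto 0).comp hbound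
  rwa [ENNReal.zero_rpow_of_pos (one_div_pos.2 hp)] at hroot

end Closure

theorem closure_of_bounded_continuous_eq_quasiContinuous_uniformly_integrable_general
    (Ps : Set (Measure Ω))
    (hPsprob : ∀ P ∈ Ps, IsProbabilityMeasure P)
    (p : ℝ) (hp : 1 ≤ p)
    (X : Ω → E) (hX : Measurable X) :
    (∃ Y : ℕ → Ω → E,
        (∀ n, Continuous (Y n)) ∧
        (∀ n, ∃ Cb : ℝ, ∀ ω, ‖Y n ω‖ ≤ Cb) ∧
        Tendsto (fun n => supLpNorm Ps p (fun ω => X ω - Y n ω)) atTop (𝓝 0)) ↔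
      (supLpNorm Ps p X < ∞ ∧
        (∃ Z : Ω → E, QuasiContinuous Ps Z ∧ capacity Ps {ω | X ω ≠ Z ω} = 0) ∧
        Tendsto
          (fun n : ℕ => ⨆ P ∈ Ps,
            ∫⁻ ω in {ω | (n : ℝ) < ‖X ω‖}, (‖X ω‖₊ : ℝ≥0∞) ^ p ∂P)
          atTop (𝓝 0)) := by
  have hp0 : 0 < p := by linarith
  constructor
  · rintro ⟨Y, hYc, hYb, hlim⟩
    exact ⟨supLpNorm_lt_top_of_tendsto hPsprob hp hX hYc hYb hlim,
      exists_quasiContinuous_version_of_tendsto hp hX hYc hlim,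
      tendsto_iSup_setLIntegral_lt_norm hp0 hX hYb hlim⟩
  · rintro ⟨-, ⟨Z, hZ, hXZ⟩, hUI⟩
    exact exists_bounded_continuous_tendsto_supLpNorm_sub hp0 hX hZ hXZ hUI

/-- over a complete separable metric space `Ω` with a nonempty family `Ps` of
Borel probability measures, for `p ≥ 1` the closure, in the norm `⦀·⦀_p` (and up to
quasi-sure identification), of the bounded continuous maps `Ω → E` consists exactly of
those Borel maps `X` with `⦀X⦀_p < ∞` which (i) have a quasi-continuous version and
(ii) satisfy `lim_n sup_{P∈Ps} ∫ ‖X‖^p·1_{‖X‖>n} dP = 0`. -/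
theorem closure_of_bounded_continuous_eq_quasiContinuous_uniformly_integrable
    (Ps : Set (Measure Ω)) (hPsne : Ps.Nonempty)
    (hPsprob : ∀ P ∈ Ps, IsProbabilityMeasure P)
    (p : ℝ) (hp : 1 ≤ p)
    (X : Ω → E) (hX : Measurable X) :
    (∃ Y : ℕ → Ω → E,
        (∀ n, Continuous (Y n)) ∧
        (∀ n, ∃ Cb : ℝ, ∀ ω, ‖Y n ω‖ ≤ Cb) ∧
        Tendsto (fun n => supLpNorm Ps p (fun ω => X ω - Y n ω)) atTop (𝓝 0)) ↔
      (supLpNorm Ps p X < ∞ ∧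
        (∃ Z : Ω → E, QuasiContinuous Ps Z ∧ capacity Ps {ω | X ω ≠ Z ω} = 0) ∧
        Tendsto
          (fun n : ℕ => ⨆ P ∈ Ps,
            ∫⁻ ω in {ω | (n : ℝ) < ‖X ω‖}, (‖X ω‖₊ : ℝ≥0∞) ^ p ∂P)
          atTop (𝓝 0)) :=
  closure_of_bounded_continuous_eq_quasiContinuous_uniformly_integrable_general Ps hPsprob p hp X hX

end
end
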